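/- For every λ⊕-term M, L(𝒯(M)) = 𝒯(L(M)): the set of resource terms occurring in the hereditary head reduct of some element of the Taylor support of M equals the Taylor support of the hereditary head reduct of M. -/

import Mathlib

set_option maxHeartbeats 1000000

/-! ### Rigid resource terms -/

/-- Rigid resource terms (de Bruijn indices for variables):
`a ::= x | λ.a | ⟨a⟩b⃗ | a⊕• | •⊕a` where argument lists are ordered. -/
inductive Rt : Type
  | var : ℕ → Rt
  | lam : Rt → Rt
  | app : Rt → List Rt → Rt
  | inl : Rt → Rt
  | inr : Rt → Rt
deriving Inhabited

/-- Rigid resource expressions: terms or (rigid) monomials. -/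
abbrev REx : Type := Rt ⊕ List Rt

/-! ### Isomorphism of rigid expressions -/

mutual
  /-- Two rigid terms are isomorphic (`≅`) when they differ only by
  permutations of argument lists. -/
  inductive IsoT : Rt → Rt → Prop
    | var (x : ℕ) : IsoT (.var x) (.var x)
    | lam {a a'} : IsoT a a' → IsoT (.lam a) (.lam a')
    | inl {a a'} : IsoT a a' → IsoT (.inl a) (.inl a')
    | inr {a a'} : IsoT a a' → IsoT (.inr a) (.inr a')
    | app {c c' : Rt} {ds ds' : List Rt} :
        IsoT c c' → IsoM ds ds' → IsoT (.app c ds) (.app c' ds')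
  /-- Isomorphism of rigid monomials: a permutation `σ` together with
  isomorphisms `aᵢ ≅ a'_{σ(i)}`. -/
  inductive IsoM : List Rt → List Rt → Prop
    | mk (as as' : List Rt) (h : as'.length = as.length) (σ : Equiv.Perm (Fin as.length))
        (H : ∀ i : Fin as.length, IsoT (as.get i) (as'.get ((σ i).cast h.symm))) :
        IsoM as as'
end

/-! ### Resource expressions as quotients of rigid expressions -/

/-- Resource terms: rigid terms up to permutations of arguments, i.e. terms
whose argument lists are multisets. -/
def ResTerm : Type := Quot IsoT

instance : Inhabited ResTerm := ⟨Quot.mk _ (.var 0)⟩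

/-- The resource term represented by a rigid term (`r ◁ |r|`). -/
def rmk : Rt → ResTerm := Quot.mk IsoT

/-- A choice of rigid representation of a resource term. -/
noncomputable def rout : ResTerm → Rt := Quot.out

/-- The resource monomial (multiset) represented by a rigid monomial (list). -/
def toMul (bs : List Rt) : Multiset ResTerm := ↑(bs.map rmk)

/-- Resource expressions: terms or monomials (finite multisets of terms). -/
abbrev ResExpr : Type := ResTerm ⊕ Multiset ResTerm

/-- The resource expression represented by a rigid expression. -/
def toQ : REx → ResExpr := Sum.map rmk toMul

/-- A choice of rigid representation of a resource expression. -/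
noncomputable def outE : ResExpr → REx :=
  Sum.map rout (fun m => m.toList.map rout)

/-- Variable as a resource term. -/
def qVar (x : ℕ) : ResTerm := rmk (.var x)

/-- Abstraction on resource terms. -/
noncomputable def qLam (s : ResTerm) : ResTerm := rmk (.lam (rout s))

/-- Left injection `(-) ⊕ •` on resource terms. -/
noncomputable def qInl (s : ResTerm) : ResTerm := rmk (.inl (rout s))

/-- Right injection `• ⊕ (-)` on resource terms. -/
noncomputable def qInr (s : ResTerm) : ResTerm := rmk (.inr (rout s))

/-- Application `⟨s⟩t̄` of a resource term to a resource monomial. -/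
noncomputable def qApp (s : ResTerm) (t : Multiset ResTerm) : ResTerm :=
  rmk (.app (rout s) (t.toList.map rout))

/-! ### The nondeterministic λ⊕-calculus (de Bruijn indices) -/

/-- λ⊕-terms: `M ::= x | λx.M | M N | M ⊕ N`. -/
inductive Lam : Type
  | var : ℕ → Lam
  | lam : Lam → Lam
  | app : Lam → Lam → Lam
  | oplus : Lam → Lam → Lam
deriving Inhabited

namespace Lam

/-- Shift free de Bruijn indices `≥ c` up by one. -/
def shift (c : ℕ) : Lam → Lam
  | .var n => .var (if n < c then n else n + 1)
  | .lam M => .lam (M.shift (c + 1))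
  | .app M N => .app (M.shift c) (N.shift c)
  | .oplus M N => .oplus (M.shift c) (N.shift c)

/-- Capture-avoiding substitution `M[N/x]` (de Bruijn). -/
def subst : Lam → ℕ → Lam → Lam
  | .var n, x, N => if n = x then N else if x < n then .var (n - 1) else .var n
  | .lam M, x, N => .lam (M.subst (x + 1) (N.shift 0))
  | .app M P, x, N => .app (M.subst x N) (P.subst x N)
  | .oplus M P, x, N => .oplus (M.subst x N) (P.subst x N)

/-- Does the head of the application spine consist of a variable? -/
def headVar : Lam → Bool
  | .var _ => true
  | .app M _ => M.headVar
  | _ => false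

/-- The hereditary head reduction strategy `L` on λ⊕-terms. -/
def headL : Lam → Lam
  | .var x => .var x
  | .oplus M N => .oplus M.headL N.headL
  | .lam (.oplus P Q) => .oplus (.lam P) (.lam Q)
  | .lam M => .lam M.headL
  | .app (.lam P) N => P.subst 0 N
  | .app (.oplus P Q) N => .oplus (.app P N) (.app Q N)
  | .app M N => if M.headVar then .app M.headL N.headL else .app M.headL N

end Lam

/-! ### The support of Taylor expansion, as a set -/

/-- The support `𝒯(M)` of the Taylor expansion of a λ⊕-term. -/
noncomputable def Tsup : Lam → Set ResTerm
  | .var x => {qVar x}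
  | .lam M => qLam '' Tsup M
  | .app P Q =>
      {u | ∃ s ∈ Tsup P, ∃ t : Multiset ResTerm, (∀ v ∈ t, v ∈ Tsup Q) ∧ u = qApp s t}
  | .oplus P Q => qInl '' Tsup P ∪ qInr '' Tsup Q

/-! ### Occurrence counting and rigid substitution -/

namespace Rt

/-- Shift free de Bruijn indices `≥ c` up by one in a rigid term. -/
def shiftR (c : ℕ) : Rt → Rt
  | .var n => .var (if n < c then n else n + 1)
  | .lam a => .lam (a.shiftR (c + 1))
  | .inl a => .inl (a.shiftR c)
  | .inr a => .inr (a.shiftR c)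
  | .app d es => .app (d.shiftR c) (es.attach.map fun e => e.1.shiftR c)
termination_by r => sizeOf r
decreasing_by
  all_goals simp_wf
  all_goals try omega
  all_goals (have := List.sizeOf_lt_of_mem e.2; omega)

end Rt

/-- Number of free occurrences `n_x(a)` of the variable `x` in a rigid term. -/
def nx (x : ℕ) : Rt → ℕ
  | .var n => if n = x then 1 else 0
  | .lam a => nx (x + 1) a
  | .inl a => nx x a
  | .inr a => nx x a
  | .app d es => nx x d + (es.attach.map fun e => nx x e.1).sum
termination_by r => sizeOf r
decreasing_by
  all_goals simp_wf
  all_goals try omega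
  all_goals (have := List.sizeOf_lt_of_mem e.2; omega)

/-- Number of free occurrences of `x` in a rigid monomial. -/
def nxL (x : ℕ) (l : List Rt) : ℕ := (l.map (nx x)).sum

/-- Number of free occurrences of `x` in a rigid expression. -/
def nxE (x : ℕ) : REx → ℕ := Sum.elim (nx x) (nxL x)

mutual
  /-- Rigid substitution `r[b⃗/x]`: the occurrences of `x` in `r`, taken from
  left to right, are replaced by the successive elements of `b⃗`; it is
  undefined (`none`, i.e. the partial rigid expression `0`) unless `n_x(r) = |b⃗|`. -/
  def rsubst : Rt → ℕ → List Rt → Option Rt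
    | .var n, x, bs =>
        if n = x then (match bs with | [b] => some b | _ => none)
        else (match bs with
              | [] => some (.var (if x < n then n - 1 else n))
              | _ => none)
    | .lam a, x, bs => (rsubst a (x + 1) (bs.map (Rt.shiftR 0))).map .lam
    | .inl a, x, bs => (rsubst a x bs).map .inl
    | .inr a, x, bs => (rsubst a x bs).map .inr
    | .app c ds, x, bs =>
        match rsubst c x (bs.take (nx x c)), rsubstL ds x (bs.drop (nx x c)) with
        | some c', some ds' => some (.app c' ds')
        | _, _ => none
  /-- Rigid substitution in a rigid monomial. -/
  def rsubstL : List Rt → ℕ → List Rt → Option (List Rt)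
    | [], _, bs => (match bs with | [] => some [] | _ => none)
    | a :: as, x, bs =>
        match rsubst a x (bs.take (nx x a)), rsubstL as x (bs.drop (nx x a)) with
        | some a', some as' => some (a' :: as')
        | _, _ => none
end

/-- Rigid substitution on rigid expressions. -/
def rsubstE : REx → ℕ → List Rt → Option REx
  | .inl r, x, bs => (rsubst r x bs).map .inl
  | .inr l, x, bs => (rsubstL l x bs).map .inr

/-- Left action of a permutation on a list:
`σ·(b₁,…,bₙ) = (b_{σ⁻¹(1)},…,b_{σ⁻¹(n)})` (identity if the length is not `n`). -/
def permList {α : Type*} {n : ℕ} (σ : Equiv.Perm (Fin n)) (l : List α) : List α :=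
  if h : l.length = n then List.ofFn (fun j : Fin n => l.get ((σ.symm j).cast h.symm))
  else l

/-! ### Hereditary head reduction of resource terms (supports) -/

/-- Does the head of the application spine of a rigid term consist of a variable? -/
def Rt.headVarR : Rt → Bool
  | .var _ => true
  | .app c _ => c.headVarR
  | _ => false

mutual
  /-- Support of the hereditary head reduct `L(a)` of a rigid term, as a set of
  resource terms. -/
  noncomputable def LsetT : Rt → Set ResTerm
    | .var x => {qVar x}
    | .inl a => qInl '' LsetT a
    | .inr a => qInr '' LsetT a
    | .lam (.inl b) => {qInl (qLam (rmk b))}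
    | .lam (.inr b) => {qInr (qLam (rmk b))}
    | .lam a => qLam '' LsetT a
    | .app (.lam b) ds =>
        {u | ∃ (σ : Equiv.Perm (Fin ds.length)) (v : Rt),
          rsubst b 0 (permList σ ds) = some v ∧ u = rmk v}
    | .app (.inl b) ds => {qInl (qApp (rmk b) (toMul ds))}
    | .app (.inr b) ds => {qInr (qApp (rmk b) (toMul ds))}
    | .app c ds =>
        if c.headVarR then {u | ∃ s ∈ LsetT c, ∃ m ∈ LsetM ds, u = qApp s m}
        else (fun s => qApp s (toMul ds)) '' LsetT c
  /-- Support of the hereditary head reduct of a rigid monomial. -/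
  noncomputable def LsetM : List Rt → Set (Multiset ResTerm)
    | [] => {0}
    | d :: ds => {m | ∃ u ∈ LsetT d, ∃ m' ∈ LsetM ds, m = u ::ₘ m'}
end

/-- Support of the hereditary head reduct `L(s)` of a resource term. -/
noncomputable def Lset (s : ResTerm) : Set ResTerm := LsetT (rout s)


/-! ### Toolkit -/

open List

theorem Rt.strongInd {P : Rt → Prop}
    (h : ∀ a : Rt, (∀ b : Rt, sizeOf b < sizeOf a → P b) → P a) : ∀ a, P a := by
  intro a
  have : ∀ n (a : Rt), sizeOf a ≤ n → P a := by
    intro n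
    induction n with
    | zero => intro a ha; exact h a (fun b hb => absurd (Nat.lt_of_lt_of_le hb ha) (by omega))
    | succ n ih => intro a ha; exact h a (fun b hb => ih b (by omega))
  exact this (sizeOf a) a le_rfl

/-- Joint strong induction for a term predicate and a list predicate. -/
theorem Rt.strongInd2 {P : Rt → Prop} {Q : List Rt → Prop}
    (h : ∀ n, (∀ b : Rt, sizeOf b < n → P b) → (∀ ds : List Rt, sizeOf ds < n → Q ds) →
      (∀ a : Rt, sizeOf a = n → P a) ∧ (∀ l : List Rt, sizeOf l = n → Q l)) :
    (∀ a, P a) ∧ (∀ l, Q l) := by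
  have key : ∀ n, (∀ a : Rt, sizeOf a ≤ n → P a) ∧ (∀ l : List Rt, sizeOf l ≤ n → Q l) := by
    intro n
    induction n using Nat.strong_induction_on with
    | _ n ih =>
      constructor
      · intro a ha
        rcases Nat.lt_or_ge (sizeOf a) n with hl | hg
        · exact (ih _ (Nat.lt_of_lt_of_le hl (le_refl n)) |>.1) a (by omega)
        · exact (h n (fun b hb => (ih (n-1) (by omega)).1 b (by omega))
            (fun ds hds => (ih (n-1) (by omega)).2 ds (by omega))).1 a (by omega)
      · intro l hl
        rcases Nat.lt_or_ge (sizeOf l) n with h2 | hg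
        · exact (ih _ h2 |>.2) l le_rfl
        · exact (h n (fun b hb => (ih (n-1) (by omega)).1 b (by omega))
            (fun ds hds => (ih (n-1) (by omega)).2 ds (by omega))).2 l (by omega)
  exact ⟨fun a => (key (sizeOf a)).1 a le_rfl, fun l => (key (sizeOf l)).2 l le_rfl⟩

theorem sizeOf_mem_lt {a : Rt} {l : List Rt} (h : a ∈ l) : sizeOf a < sizeOf l := by
  induction l with
  | nil => cases h
  | cons x xs ih =>
    rcases mem_cons.1 h with rfl | h'
    · simp; omega
    · have := ih h'; simp; omega

/-! #### permList -/

theorem Fin.cast_self_eq {n : ℕ} (h : n = n) (x : Fin n) : Fin.cast h x = x := rfl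

theorem permList_length {α : Type*} {n : ℕ} (σ : Equiv.Perm (Fin n)) (l : List α)
    (h : l.length = n) : (permList σ l).length = l.length := by
  simp [permList, h]

theorem permList_get {α : Type*} {n : ℕ} (σ : Equiv.Perm (Fin n)) (l : List α)
    (h : l.length = n) (j : Fin n) :
    (permList σ l).get ((j.cast h.symm ).cast (by rw [permList_length σ l h, h]) ) =
      l.get ((σ.symm j).cast h.symm) := by
  subst h
  simp [permList, Fin.cast_self_eq]
  rfl

theorem permList_perm {α : Type*} {n : ℕ} (σ : Equiv.Perm (Fin n)) (l : List α) :
    permList σ l ~ l := by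
  unfold permList
  split
  · next h =>
    subst h
    simp only [Fin.cast_self_eq]
    have : (fun j : Fin l.length => l.get (σ.symm j)) = l.get ∘ σ.symm := rfl
    rw [this]
    exact (Equiv.Perm.ofFn_comp_perm σ.symm l.get).trans (by rw [List.ofFn_get])
  · exact Perm.refl l

theorem permList_map {α β : Type*} {n : ℕ} (σ : Equiv.Perm (Fin n)) (l : List α) (f : α → β) :
    permList σ (l.map f) = (permList σ l).map f := by
  unfold permList
  rcases eq_or_ne l.length n with h | h
  · subst h
    rw [dif_pos (by simp), dif_pos rfl, List.map_ofFn]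
    apply List.ext_get (by simp)
    intro i h1 h2
    simp [Fin.cast_self_eq, Function.comp]
  · rw [dif_neg (by simpa using h), dif_neg h]

theorem permList_one {α : Type*} (l : List α) : permList (1 : Equiv.Perm (Fin l.length)) l = l := by
  unfold permList
  rw [dif_pos rfl]
  apply List.ext_get (by simp)
  intro i h1 h2
  simp [Fin.cast_self_eq]
  rfl

theorem ofFn_congr' {α : Type*} {m n : ℕ} (h : m = n) (f : Fin n → α) :
    List.ofFn f = List.ofFn (fun j : Fin m => f (j.cast h)) := by
  subst h; rfl

theorem perm_realize_ofFn {α : Type*} {l l' : List α} (h : l ~ l') :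
    ∃ τ : Equiv.Perm (Fin l.length), l' = List.ofFn (fun j => l.get (τ j)) := by
  induction h with
  | nil => exact ⟨1, by simp⟩
  | @cons x t t' ht ih =>
    obtain ⟨τ₀, rfl⟩ := ih
    refine ⟨Equiv.Perm.decomposeFin.symm (0, τ₀), ?_⟩
    conv_rhs => rw [List.ofFn_succ]
    congr 1 <;> try funext j
    all_goals simp [Equiv.Perm.decomposeFin_symm_apply_succ]
  | @swap x y t =>
    simp only [List.length_cons]
    refine ⟨Equiv.swap 0 1, ?_⟩
    apply List.ext_get (by simp)
    intro i h1 h2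
    rcases i with _ | _ | i
    · simp
    · simp
    · have hs : (Equiv.swap (0 : Fin (t.length + 1 + 1)) 1) ⟨i + 1 + 1, by simpa using h1⟩ =
          ⟨i + 1 + 1, by simpa using h1⟩ :=
        Equiv.swap_apply_of_ne_of_ne (by simp [Fin.ext_iff]) (by simp [Fin.ext_iff])
      simp [hs]
  | @trans l₁ l₂ l₃ h₁ h₂ ih₁ ih₂ =>
    obtain ⟨τ₁, rfl⟩ := ih₁
    obtain ⟨τ₂, hl₃⟩ := ih₂
    have hlen : (List.ofFn (fun j => l₁.get (τ₁ j))).length = l₁.length := by simp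
    refine ⟨((finCongr hlen.symm).trans τ₂).trans ((finCongr hlen).trans τ₁), ?_⟩
    rw [hl₃, ofFn_congr' hlen.symm]
    congr 1
    funext j
    simp only [Equiv.trans_apply, finCongr_apply, List.get_ofFn]
    all_goals try (congr 1; apply Fin.ext; simp)


/-- Any permutation of a list is realized by an index permutation acting via `permList`. -/
theorem perm_realize {α : Type*} {l l' : List α} (h : l ~ l') :
    ∃ σ : Equiv.Perm (Fin l.length), l' = permList σ l := by
  obtain ⟨τ, rfl⟩ := perm_realize_ofFn h
  refine ⟨τ.symm, ?_⟩
  unfold permList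
  rw [dif_pos rfl]
  rfl

/-! #### Forall₂ / Perm exchange -/

theorem forall₂_perm_left {α β : Type*} {R : α → β → Prop} :
    ∀ {l l' : List α} {m : List β}, l ~ l' → Forall₂ R l m →
      ∃ m', m' ~ m ∧ Forall₂ R l' m' := by
  intro l l' m hp
  induction hp generalizing m with
  | nil => intro h; cases h; exact ⟨[], Perm.refl _, Forall₂.nil⟩
  | cons x hp ih =>
    intro h
    cases h with
    | cons hxy htail =>
      obtain ⟨m', hm', hf⟩ := ih htail
      exact ⟨_ :: m', hm'.cons _, hf.cons hxy⟩
  | swap x y t =>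
    intro h
    cases h with
    | cons h1 h2 =>
      cases h2 with
      | cons h3 h4 => exact ⟨_ :: _ :: _, Perm.swap _ _ _, (h4.cons h1).cons h3⟩
  | trans _ _ ih1 ih2 =>
    intro h
    obtain ⟨m₁, hm₁, hf₁⟩ := ih1 h
    obtain ⟨m₂, hm₂, hf₂⟩ := ih2 hf₁
    exact ⟨m₂, hm₂.trans hm₁, hf₂⟩

theorem forall₂_perm_right {α β : Type*} {R : α → β → Prop} {l : List α} {m m' : List β}
    (hf : Forall₂ R l m) (hp : m ~ m') : ∃ l', l ~ l' ∧ Forall₂ R l' m' := by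
  obtain ⟨l', hl', hf'⟩ := forall₂_perm_left hp hf.flip
  exact ⟨l', hl'.symm, hf'.flip⟩

theorem forall₂_trans' {α β γ : Type*} {R : α → β → Prop} {S : β → γ → Prop}
    {T : α → γ → Prop} :
    ∀ {l₁ : List α} {l₂ : List β} {l₃ : List γ},
      (∀ a ∈ l₁, ∀ b c, R a b → S b c → T a c) →
      Forall₂ R l₁ l₂ → Forall₂ S l₂ l₃ → Forall₂ T l₁ l₃ := by
  intro l₁ l₂ l₃ hcomp h1
  induction h1 generalizing l₃ with
  | nil => intro h; cases h; exact Forall₂.nil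
  | @cons x y t t' hxy _ ih =>
    intro h
    cases h with
    | cons hyz htail =>
      exact (ih (fun a ha => hcomp a (mem_cons_of_mem _ ha)) htail).cons
        (hcomp x (mem_cons_self ..) _ _ hxy hyz)

/-! #### IsoM characterization -/

theorem isoM_intro {as l as' : List Rt} (F : Forall₂ IsoT as l) (P : l ~ as') : IsoM as as' := by
  obtain ⟨τ, rfl⟩ := perm_realize_ofFn P
  have len : as.length = l.length := F.length_eq
  refine IsoM.mk as _ (by simp [len]) ((finCongr len).trans (τ.symm.trans (finCongr len.symm)))
    (fun i => ?_)
  rw [List.get_ofFn]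
  suffices hsuff : ∀ j : Fin l.length, j = τ.symm (Fin.cast len i) →
      IsoT (as.get i) (l.get (τ j)) by
    apply hsuff
    apply Fin.ext
    simp
  intro j hj
  rw [hj, Equiv.apply_symm_apply]
  exact F.get i.2 (by simpa [← len] using i.2)

theorem isoM_elim {as as' : List Rt} (h : IsoM as as') :
    ∃ l, Forall₂ IsoT as l ∧ l ~ as' := by
  obtain ⟨as, as', h, σ, H⟩ := h
  refine ⟨List.ofFn (fun i : Fin as.length => as'.get ((σ i).cast h.symm)), ?_, ?_⟩
  · rw [List.forall₂_iff_get]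
    refine ⟨by simp, fun i h1 h2 => ?_⟩
    rw [List.get_ofFn]
    exact H ⟨i, h1⟩
  · have heq : (fun i : Fin as.length => as'.get ((σ i).cast h.symm)) =
        (fun i : Fin as.length => as'.get (i.cast h.symm)) ∘ σ := rfl
    rw [heq]
    refine (Equiv.Perm.ofFn_comp_perm σ _).trans ?_
    rw [← ofFn_congr' h.symm as'.get, List.ofFn_get]

theorem forall₂_refl_of {α : Type*} {R : α → α → Prop} {l : List α}
    (h : ∀ x ∈ l, R x x) : Forall₂ R l l := by
  induction l with
  | nil => exact Forall₂.nil
  | cons x t ih => exact (ih (fun y hy => h y (mem_cons_of_mem _ hy))).cons (h x (mem_cons_self ..))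

theorem isoT_refl : ∀ a : Rt, IsoT a a := by
  intro a
  induction a using Rt.strongInd with
  | h a ih =>
    match a with
    | .var n => exact IsoT.var n
    | .lam b => exact IsoT.lam (ih b (by simp <;> omega))
    | .inl b => exact IsoT.inl (ih b (by simp <;> omega))
    | .inr b => exact IsoT.inr (ih b (by simp <;> omega))
    | .app c ds =>
      refine IsoT.app (ih c (by simp <;> omega)) (isoM_intro (forall₂_refl_of fun x hx => ?_)
        (Perm.refl _))
      exact ih x (by have := sizeOf_mem_lt hx; simp <;> omega)

theorem isoM_refl (l : List Rt) : IsoM l l :=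
  isoM_intro (forall₂_refl_of fun x _ => isoT_refl x) (Perm.refl _)

theorem isoT_symm : ∀ a b : Rt, IsoT a b → IsoT b a := by
  intro a
  induction a using Rt.strongInd with
  | h a ih =>
    intro b hab
    cases hab with
    | var n => exact IsoT.var n
    | lam h => exact IsoT.lam (ih _ (by simp <;> omega) _ h)
    | inl h => exact IsoT.inl (ih _ (by simp <;> omega) _ h)
    | inr h => exact IsoT.inr (ih _ (by simp <;> omega) _ h)
    | @app c c' ds ds' hc hm =>
      refine IsoT.app (ih _ (by simp <;> omega) _ hc) ?_
      obtain ⟨l, F, P⟩ := isoM_elim hm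
      have F' : Forall₂ IsoT l ds := by
        rw [List.forall₂_iff_get] at F ⊢
        refine ⟨F.1.symm, fun i h1 h2 => ih _ ?_ _ (F.2 i h2 h1)⟩
        have := sizeOf_mem_lt (List.get_mem ds ⟨i, h2⟩)
        simp at this ⊢ <;> omega
      obtain ⟨m', hm', hf'⟩ := forall₂_perm_left P F'
      exact isoM_intro hf' hm'

theorem isoT_trans : ∀ a b c : Rt, IsoT a b → IsoT b c → IsoT a c := by
  intro a
  induction a using Rt.strongInd with
  | h a ih =>
    intro b c hab hbc
    cases hab with
    | var n => exact hbc
    | lam h => cases hbc with | lam h2 => exact IsoT.lam (ih _ (by simp <;> omega) _ _ h h2)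
    | inl h => cases hbc with | inl h2 => exact IsoT.inl (ih _ (by simp <;> omega) _ _ h h2)
    | inr h => cases hbc with | inr h2 => exact IsoT.inr (ih _ (by simp <;> omega) _ _ h h2)
    | @app c₁ c₂ ds es hc hm =>
      cases hbc with
      | @app _ c₃ _ fs hc2 hm2 =>
        refine IsoT.app (ih _ (by simp <;> omega) _ _ hc hc2) ?_
        obtain ⟨l₁, F₁, P₁⟩ := isoM_elim hm
        obtain ⟨l₂, F₂, P₂⟩ := isoM_elim hm2
        obtain ⟨l₄, hl₄, hf₄⟩ := forall₂_perm_left P₁.symm F₂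
        have hcomp : ∀ a ∈ ds, ∀ b c, IsoT a b → IsoT b c → IsoT a c := fun x hx y z hxy hyz =>
          ih x (by have := sizeOf_mem_lt hx; simp <;> omega) _ _ hxy hyz
        exact isoM_intro (forall₂_trans' hcomp F₁ hf₄) (hl₄.trans P₂)

/-! #### Quotient lemmas -/

theorem isoT_equiv : Equivalence IsoT :=
  ⟨isoT_refl, fun h => isoT_symm _ _ h, fun h h2 => isoT_trans _ _ _ h h2⟩

theorem rmk_eq_iff {a b : Rt} : rmk a = rmk b ↔ IsoT a b := by
  constructor
  · intro h
    exact (Equivalence.eqvGen_iff isoT_equiv).1 (Quot.eq.1 h)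
  · exact Quot.sound

theorem rmk_rout (s : ResTerm) : rmk (rout s) = s := Quot.out_eq s

theorem rout_iso (a : Rt) : IsoT (rout (rmk a)) a := rmk_eq_iff.1 (rmk_rout (rmk a))

theorem qVar_eq (x : ℕ) : qVar x = rmk (.var x) := rfl

theorem qLam_rmk (a : Rt) : qLam (rmk a) = rmk (.lam a) :=
  rmk_eq_iff.2 (IsoT.lam (rout_iso a))

theorem qInl_rmk (a : Rt) : qInl (rmk a) = rmk (.inl a) :=
  rmk_eq_iff.2 (IsoT.inl (rout_iso a))

theorem qInr_rmk (a : Rt) : qInr (rmk a) = rmk (.inr a) :=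
  rmk_eq_iff.2 (IsoT.inr (rout_iso a))

theorem forall₂_mem_left {α β : Type*} {R : α → β → Prop} {l : List α} {m : List β}
    (h : Forall₂ R l m) {d : α} (hd : d ∈ l) : ∃ e ∈ m, R d e := by
  induction h with
  | nil => cases hd
  | cons hxy htail ih =>
    rcases mem_cons.1 hd with rfl | hd'
    · exact ⟨_, mem_cons_self .., hxy⟩
    · obtain ⟨e, he, hre⟩ := ih hd'
      exact ⟨e, mem_cons_of_mem _ he, hre⟩

theorem toMul_nil : toMul [] = 0 := rfl

theorem toMul_cons (d : Rt) (ds : List Rt) : toMul (d :: ds) = rmk d ::ₘ toMul ds := rfl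

theorem mem_toMul {v : ResTerm} {ds : List Rt} : v ∈ toMul ds ↔ ∃ d ∈ ds, v = rmk d := by
  simp [toMul, eq_comm]

theorem toMul_routs (t : Multiset ResTerm) : toMul (t.toList.map rout) = t := by
  show ↑((t.toList.map rout).map rmk) = t
  rw [List.map_map]
  have : rmk ∘ rout = id := funext rmk_rout
  rw [this, List.map_id, Multiset.coe_toList]

theorem isoM_of_routs (ds : List Rt) : IsoM ((toMul ds).toList.map rout) ds := by
  have hL : (toMul ds).toList ~ ds.map rmk := by
    rw [← Multiset.coe_eq_coe, Multiset.coe_toList]; rfl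
  have hperm : ((toMul ds).toList.map rout) ~ ds.map (fun d => rout (rmk d)) := by
    simpa [List.map_map, Function.comp_def] using hL.map rout
  have hfa : Forall₂ IsoT (ds.map (fun d => rout (rmk d))) ds := by
    rw [List.forall₂_iff_get]
    refine ⟨by simp, fun i h1 h2 => ?_⟩
    simp only [List.get_eq_getElem, List.getElem_map]
    exact rout_iso _
  obtain ⟨m', hm', hf'⟩ := forall₂_perm_left hperm.symm hfa
  exact isoM_intro hf' hm'

theorem qApp_rmk (c : Rt) (ds : List Rt) : qApp (rmk c) (toMul ds) = rmk (.app c ds) :=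
  rmk_eq_iff.2 (IsoT.app (rout_iso c) (isoM_of_routs ds))

/-! #### Rigid membership in the Taylor support -/

theorem mem_Tsup_var {b : Rt} {n : ℕ} : rmk b ∈ Tsup (.var n) ↔ b = .var n := by
  constructor
  · intro h
    have : rmk b = rmk (.var n) := h
    cases rmk_eq_iff.1 this
    rfl
  · rintro rfl; exact rfl

theorem mem_Tsup_lam {b : Rt} {M : Lam} :
    rmk b ∈ Tsup (.lam M) ↔ ∃ a, b = .lam a ∧ rmk a ∈ Tsup M := by
  constructor
  · rintro ⟨s, hs, heq⟩
    rw [← rmk_rout s, qLam_rmk] at heq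
    cases rmk_eq_iff.1 heq.symm with
    | lam h =>
      rename_i a
      exact ⟨a, rfl, by rw [rmk_eq_iff.2 h, rmk_rout]; exact hs⟩
  · rintro ⟨a, rfl, ha⟩
    exact ⟨rmk a, ha, qLam_rmk a⟩

theorem mem_Tsup_oplus {b : Rt} {P Q : Lam} :
    rmk b ∈ Tsup (.oplus P Q) ↔
      (∃ a, b = .inl a ∧ rmk a ∈ Tsup P) ∨ (∃ a, b = .inr a ∧ rmk a ∈ Tsup Q) := by
  constructor
  · rintro (⟨s, hs, heq⟩ | ⟨s, hs, heq⟩)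
    · rw [← rmk_rout s, qInl_rmk] at heq
      cases rmk_eq_iff.1 heq.symm with
      | inl h =>
        rename_i a
        exact Or.inl ⟨a, rfl, by rw [rmk_eq_iff.2 h, rmk_rout]; exact hs⟩
    · rw [← rmk_rout s, qInr_rmk] at heq
      cases rmk_eq_iff.1 heq.symm with
      | inr h =>
        rename_i a
        exact Or.inr ⟨a, rfl, by rw [rmk_eq_iff.2 h, rmk_rout]; exact hs⟩
  · rintro (⟨a, rfl, ha⟩ | ⟨a, rfl, ha⟩)
    · exact Or.inl ⟨rmk a, ha, qInl_rmk a⟩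
    · exact Or.inr ⟨rmk a, ha, qInr_rmk a⟩

theorem mem_Tsup_app {b : Rt} {P Q : Lam} :
    rmk b ∈ Tsup (.app P Q) ↔
      ∃ c ds, b = .app c ds ∧ rmk c ∈ Tsup P ∧ ∀ d ∈ ds, rmk d ∈ Tsup Q := by
  constructor
  · rintro ⟨s, hs, t, ht, heq⟩
    rw [← rmk_rout s, ← toMul_routs t, qApp_rmk] at heq
    cases rmk_eq_iff.1 heq with
    | app hc hm =>
      rename_i c ds
      refine ⟨c, ds, rfl, by rw [rmk_eq_iff.2 hc, rmk_rout]; exact hs, fun d hd => ?_⟩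
      obtain ⟨l, F, Pm⟩ := isoM_elim hm
      obtain ⟨e, he, hde⟩ := forall₂_mem_left F hd
      have he' : e ∈ t.toList.map rout := Pm.mem_iff.1 he
      obtain ⟨v, hv, rfl⟩ := List.mem_map.1 he'
      rw [rmk_eq_iff.2 hde, rmk_rout]
      exact ht v (Multiset.mem_toList.1 hv)
  · rintro ⟨c, ds, rfl, hc, hds⟩
    refine ⟨rmk c, hc, toMul ds, fun v hv => ?_, (qApp_rmk c ds).symm⟩
    obtain ⟨d, hd, rfl⟩ := mem_toMul.1 hv
    exact hds d hd

/-! #### Equation lemmas -/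

theorem Rt.shiftR_var (c n : ℕ) : (Rt.var n).shiftR c = .var (if n < c then n else n + 1) := by
  rw [Rt.shiftR]

theorem Rt.shiftR_lam (c : ℕ) (a : Rt) : (Rt.lam a).shiftR c = .lam (a.shiftR (c + 1)) := by
  rw [Rt.shiftR]

theorem Rt.shiftR_inl (c : ℕ) (a : Rt) : (Rt.inl a).shiftR c = .inl (a.shiftR c) := by
  rw [Rt.shiftR]

theorem Rt.shiftR_inr (c : ℕ) (a : Rt) : (Rt.inr a).shiftR c = .inr (a.shiftR c) := by
  rw [Rt.shiftR]

theorem Rt.shiftR_app (c : ℕ) (d : Rt) (es : List Rt) :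
    (Rt.app d es).shiftR c = .app (d.shiftR c) (es.map (·.shiftR c)) := by
  rw [Rt.shiftR]
  congr 1
  simp [List.attach_map_val]

theorem nx_var (x n : ℕ) : nx x (.var n) = if n = x then 1 else 0 := by rw [nx]
theorem nx_lam (x : ℕ) (a : Rt) : nx x (.lam a) = nx (x + 1) a := by rw [nx]
theorem nx_inl (x : ℕ) (a : Rt) : nx x (.inl a) = nx x a := by rw [nx]
theorem nx_inr (x : ℕ) (a : Rt) : nx x (.inr a) = nx x a := by rw [nx]
theorem nx_app (x : ℕ) (d : Rt) (es : List Rt) :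
    nx x (.app d es) = nx x d + (es.map (nx x)).sum := by
  rw [nx]
  congr 1
  simp [List.attach_map_val]

theorem nxL_nil (x : ℕ) : nxL x [] = 0 := rfl
theorem nxL_cons (x : ℕ) (d : Rt) (ds : List Rt) : nxL x (d :: ds) = nx x d + nxL x ds := by
  simp [nxL]

theorem rsubst_lam (a : Rt) (x : ℕ) (bs : List Rt) :
    rsubst (.lam a) x bs = (rsubst a (x + 1) (bs.map (Rt.shiftR 0))).map .lam := by
  rw [rsubst]

theorem rsubst_inl (a : Rt) (x : ℕ) (bs : List Rt) :
    rsubst (.inl a) x bs = (rsubst a x bs).map .inl := by rw [rsubst]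

theorem rsubst_inr (a : Rt) (x : ℕ) (bs : List Rt) :
    rsubst (.inr a) x bs = (rsubst a x bs).map .inr := by rw [rsubst]

theorem rsubst_var_some {n x : ℕ} {bs : List Rt} {v : Rt} :
    rsubst (.var n) x bs = some v ↔
      (n = x ∧ bs = [v]) ∨ (n ≠ x ∧ bs = [] ∧ v = .var (if x < n then n - 1 else n)) := by
  rw [rsubst.eq_def]
  rcases eq_or_ne n x with rfl | hne
  · rcases bs with _ | ⟨b, _ | ⟨b', bs⟩⟩ <;> simp [eq_comm]
  · rcases bs with _ | ⟨b, bs⟩ <;> simp [hne, eq_comm]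

theorem rsubst_var_self (x : ℕ) (v : Rt) : rsubst (.var x) x [v] = some v :=
  rsubst_var_some.2 (Or.inl ⟨rfl, rfl⟩)

theorem rsubst_var_ne {n x : ℕ} (h : n ≠ x) :
    rsubst (.var n) x [] = some (.var (if x < n then n - 1 else n)) :=
  rsubst_var_some.2 (Or.inr ⟨h, rfl, rfl⟩)

theorem rsubst_app_some {c : Rt} {ds : List Rt} {x : ℕ} {bs : List Rt} {v : Rt} :
    rsubst (.app c ds) x bs = some v ↔
      ∃ c' ds', rsubst c x (bs.take (nx x c)) = some c' ∧
        rsubstL ds x (bs.drop (nx x c)) = some ds' ∧ v = .app c' ds' := by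
  rw [rsubst]
  rcases h1 : rsubst c x (bs.take (nx x c)) with _ | c' <;>
    rcases h2 : rsubstL ds x (bs.drop (nx x c)) with _ | ds' <;> simp [eq_comm]

theorem rsubstL_nil_some {x : ℕ} {bs : List Rt} {vs : List Rt} :
    rsubstL [] x bs = some vs ↔ bs = [] ∧ vs = [] := by
  rw [rsubstL.eq_def]
  rcases bs with _ | ⟨b, bs⟩ <;> simp [eq_comm]

theorem rsubstL_cons_some {d : Rt} {ds : List Rt} {x : ℕ} {bs : List Rt} {vs : List Rt} :
    rsubstL (d :: ds) x bs = some vs ↔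
      ∃ v' vs', rsubst d x (bs.take (nx x d)) = some v' ∧
        rsubstL ds x (bs.drop (nx x d)) = some vs' ∧ vs = v' :: vs' := by
  rw [rsubstL]
  rcases h1 : rsubst d x (bs.take (nx x d)) with _ | v' <;>
    rcases h2 : rsubstL ds x (bs.drop (nx x d)) with _ | vs' <;> simp [eq_comm]

/-! #### Counting and substitution -/

theorem nx_rsubst_both :
    (∀ a : Rt, ∀ x bs v, rsubst a x bs = some v → bs.length = nx x a) ∧
    (∀ l : List Rt, ∀ x bs vs, rsubstL l x bs = some vs → bs.length = nxL x l) := by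
  refine Rt.strongInd2 (fun n ihT ihL => ⟨?_, ?_⟩)
  · rintro a rfl x bs v hv
    match a with
    | .var m =>
      rcases rsubst_var_some.1 hv with ⟨rfl, rfl⟩ | ⟨hne, rfl, rfl⟩
      · simp [nx_var]
      · simp [nx_var, hne]
    | .lam a =>
      rw [rsubst_lam, Option.map_eq_some_iff] at hv
      obtain ⟨w, hw, rfl⟩ := hv
      have := ihT a (by simp <;> omega) _ _ _ hw
      simpa [nx_lam] using this
    | .inl a =>
      rw [rsubst_inl, Option.map_eq_some_iff] at hv
      obtain ⟨w, hw, rfl⟩ := hv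
      simpa [nx_inl] using ihT a (by simp <;> omega) _ _ _ hw
    | .inr a =>
      rw [rsubst_inr, Option.map_eq_some_iff] at hv
      obtain ⟨w, hw, rfl⟩ := hv
      simpa [nx_inr] using ihT a (by simp <;> omega) _ _ _ hw
    | .app c ds =>
      obtain ⟨c', ds', h1, h2, rfl⟩ := rsubst_app_some.1 hv
      have e1 := ihT c (by simp <;> omega) _ _ _ h1
      have e2 := ihL ds (by simp <;> omega) _ _ _ h2
      rw [List.length_take] at e1
      rw [List.length_drop] at e2
      rw [nx_app]
      have hss : (ds.map (nx x)).sum = nxL x ds := rfl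
      rw [hss]
      omega
  · rintro l rfl x bs vs hvs
    match l with
    | [] =>
      obtain ⟨rfl, rfl⟩ := rsubstL_nil_some.1 hvs
      simp [nxL_nil]
    | d :: ds =>
      obtain ⟨v', vs', h1, h2, rfl⟩ := rsubstL_cons_some.1 hvs
      have e1 := ihT d (by simp <;> omega) _ _ _ h1
      have e2 := ihL ds (by simp <;> omega) _ _ _ h2
      rw [List.length_take] at e1
      rw [List.length_drop] at e2
      rw [nxL_cons]
      omega

theorem nx_rsubst {a : Rt} {x : ℕ} {bs : List Rt} {v : Rt} (h : rsubst a x bs = some v) :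
    bs.length = nx x a := nx_rsubst_both.1 a x bs v h

theorem nxL_rsubstL {l : List Rt} {x : ℕ} {bs : List Rt} {vs : List Rt}
    (h : rsubstL l x bs = some vs) : bs.length = nxL x l := nx_rsubst_both.2 l x bs vs h

theorem take_nx {a : Rt} {x : ℕ} {bs bs2 : List Rt} {v : Rt}
    (h : rsubst a x (bs.take (nx x a)) = some v) : nx x a ≤ bs.length → True := fun _ => trivial

/-! #### Iso respects counting, shifting, head-variable -/

theorem nx_isoT : ∀ a : Rt, ∀ a' x, IsoT a a' → nx x a = nx x a' := by
  intro a
  induction a using Rt.strongInd with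
  | h a ih =>
    intro a' x hiso
    cases hiso with
    | var n => rfl
    | lam h => rw [nx_lam, nx_lam]; exact ih _ (by simp <;> omega) _ _ h
    | inl h => rw [nx_inl, nx_inl]; exact ih _ (by simp <;> omega) _ _ h
    | inr h => rw [nx_inr, nx_inr]; exact ih _ (by simp <;> omega) _ _ h
    | @app c c' ds ds' hc hm =>
      rw [nx_app, nx_app]
      obtain ⟨l, F, P⟩ := isoM_elim hm
      have hmap : ds.map (nx x) = l.map (nx x) := by
        apply List.ext_get (by simp [F.length_eq])
        intro i h1 h2
        simp only [List.get_eq_getElem, List.getElem_map]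
        refine ih _ ?_ _ _ (F.get (by simpa using h1) (by simpa using h2))
        have := sizeOf_mem_lt (List.get_mem ds ⟨i, by simpa using h1⟩)
        simp at this ⊢ <;> omega
      rw [ih c (by simp <;> omega) _ x hc, hmap, (P.map (nx x)).sum_eq]

theorem nxL_isoM {ds ds' : List Rt} (h : IsoM ds ds') (x : ℕ) : nxL x ds = nxL x ds' := by
  have h1 := nx_isoT (.app (.var 0) ds) (.app (.var 0) ds') x (IsoT.app (IsoT.var 0) h)
  rw [nx_app, nx_app] at h1
  have e1 : (ds.map (nx x)).sum = nxL x ds := rfl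
  have e2 : (ds'.map (nx x)).sum = nxL x ds' := rfl
  omega

theorem forall₂_map_iso {bs cs : List Rt} {f : Rt → Rt}
    (hresp : ∀ a a', IsoT a a' → IsoT (f a) (f a'))
    (h : Forall₂ IsoT bs cs) : Forall₂ IsoT (bs.map f) (cs.map f) := by
  induction h with
  | nil => exact Forall₂.nil
  | cons hxy _ ih => exact ih.cons (hresp _ _ hxy)

theorem shiftR_isoT : ∀ a : Rt, ∀ a' c, IsoT a a' → IsoT (a.shiftR c) (a'.shiftR c) := by
  intro a
  induction a using Rt.strongInd with
  | h a ih =>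
    intro a' c hiso
    cases hiso with
    | var n => rw [Rt.shiftR_var]; exact isoT_refl _
    | lam h => rw [Rt.shiftR_lam, Rt.shiftR_lam]; exact IsoT.lam (ih _ (by simp <;> omega) _ _ h)
    | inl h => rw [Rt.shiftR_inl, Rt.shiftR_inl]; exact IsoT.inl (ih _ (by simp <;> omega) _ _ h)
    | inr h => rw [Rt.shiftR_inr, Rt.shiftR_inr]; exact IsoT.inr (ih _ (by simp <;> omega) _ _ h)
    | @app d d' ds ds' hc hm =>
      rw [Rt.shiftR_app, Rt.shiftR_app]
      refine IsoT.app (ih _ (by simp <;> omega) _ _ hc) ?_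
      obtain ⟨l, F, P⟩ := isoM_elim hm
      have F' : Forall₂ IsoT (ds.map (·.shiftR c)) (l.map (·.shiftR c)) := by
        rw [List.forall₂_iff_get]
        refine ⟨by simp [F.length_eq], fun i h1 h2 => ?_⟩
        simp only [List.get_eq_getElem, List.getElem_map]
        refine ih _ ?_ _ _ (F.get (by simpa using h1) (by simpa using h2))
        have := sizeOf_mem_lt (List.get_mem ds ⟨i, by simpa using h1⟩)
        simp at this ⊢ <;> omega
      exact isoM_intro F' (P.map _)

theorem headVarR_isoT : ∀ a : Rt, ∀ a', IsoT a a' → a.headVarR = a'.headVarR := by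
  intro a
  induction a using Rt.strongInd with
  | h a ih =>
    intro a' hiso
    cases hiso with
    | var n => rfl
    | lam h => rfl
    | inl h => rfl
    | inr h => rfl
    | @app c c' ds ds' hc hm =>
      show c.headVarR = c'.headVarR
      exact ih c (by simp <;> omega) _ hc

/-! #### IsoM glue -/

theorem isoM_of_perm {vs vs' : List Rt} (h : vs ~ vs') : IsoM vs vs' :=
  isoM_intro (forall₂_refl_of fun x _ => isoT_refl x) h

theorem isoM_perm_right {vs w w' : List Rt} (h : IsoM vs w) (hp : w ~ w') : IsoM vs w' := by
  obtain ⟨l, F, P⟩ := isoM_elim h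
  exact isoM_intro F (P.trans hp)

theorem isoM_cons {u u' : Rt} {us us' : List Rt} (h : IsoT u u') (hm : IsoM us us') :
    IsoM (u :: us) (u' :: us') := by
  obtain ⟨l, F, P⟩ := isoM_elim hm
  exact isoM_intro (F.cons h) (P.cons u')

/-! #### Permuting a rigid monomial in substitution -/

theorem rsubstL_permMove {ds ds'' : List Rt} (hperm : ds ~ ds'') :
    ∀ x bs vs, rsubstL ds x bs = some vs →
      ∃ bs', bs' ~ bs ∧ ∃ vs', rsubstL ds'' x bs' = some vs' ∧ vs' ~ vs := by
  induction hperm with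
  | nil =>
    intro x bs vs h
    obtain ⟨rfl, rfl⟩ := rsubstL_nil_some.1 h
    exact ⟨[], Perm.refl _, [], rsubstL_nil_some.2 ⟨rfl, rfl⟩, Perm.refl _⟩
  | @cons d t t' hp ih =>
    intro x bs vs h
    obtain ⟨v, vs₀, h1, h2, rfl⟩ := rsubstL_cons_some.1 h
    obtain ⟨bs₂, hbs₂, vs₂, hsub₂, hvs₂⟩ := ih x _ _ h2
    have hlen : (bs.take (nx x d)).length = nx x d := nx_rsubst h1
    refine ⟨bs.take (nx x d) ++ bs₂, ?_, v :: vs₂, ?_, hvs₂.cons v⟩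
    · exact ((hbs₂.append_left (bs.take (nx x d))).trans
        (by rw [List.take_append_drop])).symm.symm
    · refine rsubstL_cons_some.2 ⟨v, vs₂, ?_, ?_, rfl⟩
      · rw [List.take_left' hlen]; exact h1
      · rw [List.drop_left' hlen]; exact hsub₂
  | @swap p q t =>
    intro x bs vs h
    obtain ⟨v₁, vs₁, h1, h2, rfl⟩ := rsubstL_cons_some.1 h
    obtain ⟨v₂, vs₀, h3, h4, rfl⟩ := rsubstL_cons_some.1 h2
    set k₁ := nx x q with hk₁
    set k₂ := nx x p with hk₂
    have hl₁ : (bs.take k₁).length = k₁ := nx_rsubst h1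
    have hl₂ : (((bs.drop k₁)).take k₂).length = k₂ := nx_rsubst h3
    refine ⟨(bs.drop k₁).take k₂ ++ (bs.take k₁ ++ (bs.drop k₁).drop k₂), ?_,
      v₂ :: v₁ :: vs₀, ?_, Perm.swap _ _ _⟩
    · calc (bs.drop k₁).take k₂ ++ (bs.take k₁ ++ (bs.drop k₁).drop k₂)
          ~ bs.take k₁ ++ ((bs.drop k₁).take k₂ ++ (bs.drop k₁).drop k₂) := by
            rw [← List.append_assoc, ← List.append_assoc]
            exact (perm_append_comm).append_right _
        _ = bs := by rw [List.take_append_drop, List.take_append_drop]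
    · refine rsubstL_cons_some.2 ⟨v₂, v₁ :: vs₀, ?_, ?_⟩
      · rw [List.take_left' hl₂]; exact h3
      · rw [List.drop_left' hl₂]
        refine ⟨rsubstL_cons_some.2 ⟨v₁, vs₀, ?_, ?_, rfl⟩, rfl⟩
        · rw [List.take_left' hl₁]; exact h1
        · rw [List.drop_left' hl₁]; exact h4
  | @trans t₁ t₂ t₃ hp₁ hp₂ ih₁ ih₂ =>
    intro x bs vs h
    obtain ⟨bs₁, hbs₁, vs₁, hsub₁, hvs₁⟩ := ih₁ x _ _ h
    obtain ⟨bs₂, hbs₂, vs₂, hsub₂, hvs₂⟩ := ih₂ x _ _ hsub₁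
    exact ⟨bs₂, hbs₂.trans hbs₁, vs₂, hsub₂, hvs₂.trans hvs₁⟩

/-! #### Substitution respects isomorphism -/

theorem rsubst_isoP_both :
    (∀ b : Rt, ∀ b' x bs cs v, IsoT b b' → Forall₂ IsoT bs cs → rsubst b x bs = some v →
      ∃ cs', cs' ~ cs ∧ ∃ v', rsubst b' x cs' = some v' ∧ IsoT v v') ∧
    (∀ ds : List Rt, ∀ ds' x bs cs vs, IsoM ds ds' → Forall₂ IsoT bs cs →
      rsubstL ds x bs = some vs →
      ∃ cs', cs' ~ cs ∧ ∃ vs', rsubstL ds' x cs' = some vs' ∧ IsoM vs vs') := by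
  refine Rt.strongInd2 (fun n ihT ihL => ⟨?_, ?_⟩)
  · rintro b rfl b' x bs cs v hiso hf hsub
    cases hiso with
    | var m =>
      rcases rsubst_var_some.1 hsub with ⟨rfl, rfl⟩ | ⟨hne, rfl, rfl⟩
      · cases hf with
        | @cons _ c₀ _ cs₀ h1 h2 =>
          cases h2
          exact ⟨[c₀], Perm.refl _, c₀, rsubst_var_self _ _, h1⟩
      · cases hf
        exact ⟨[], Perm.refl _, _, rsubst_var_ne hne, isoT_refl _⟩
    | @lam a a' h =>
      rw [rsubst_lam, Option.map_eq_some_iff] at hsub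
      obtain ⟨w, hw, rfl⟩ := hsub
      have hf' : Forall₂ IsoT (bs.map (Rt.shiftR 0)) (cs.map (Rt.shiftR 0)) :=
        forall₂_map_iso (fun a a' hi => shiftR_isoT a a' 0 hi) hf
      obtain ⟨cs₁, hcs₁, w', hw', hww'⟩ :=
        ihT a (by simp <;> omega) a' (x + 1) _ _ _ h hf' hw
      obtain ⟨σ, hσ⟩ := perm_realize hcs₁.symm
      rw [permList_map] at hσ
      refine ⟨permList σ cs, (permList_perm σ cs), .lam w', ?_, IsoT.lam hww'⟩
      rw [rsubst_lam, ← hσ, hw']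
      rfl
    | @inl a a' h =>
      rw [rsubst_inl, Option.map_eq_some_iff] at hsub
      obtain ⟨w, hw, rfl⟩ := hsub
      obtain ⟨cs₁, hcs₁, w', hw', hww'⟩ := ihT a (by simp <;> omega) a' x _ _ _ h hf hw
      exact ⟨cs₁, hcs₁, .inl w', by rw [rsubst_inl, hw']; rfl, IsoT.inl hww'⟩
    | @inr a a' h =>
      rw [rsubst_inr, Option.map_eq_some_iff] at hsub
      obtain ⟨w, hw, rfl⟩ := hsub
      obtain ⟨cs₁, hcs₁, w', hw', hww'⟩ := ihT a (by simp <;> omega) a' x _ _ _ h hf hw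
      exact ⟨cs₁, hcs₁, .inr w', by rw [rsubst_inr, hw']; rfl, IsoT.inr hww'⟩
    | @app c c' ds ds' hc hm =>
      obtain ⟨e, es, h1, h2, rfl⟩ := rsubst_app_some.1 hsub
      have hftake := List.forall₂_take (nx x c) hf
      have hfdrop := List.forall₂_drop (nx x c) hf
      obtain ⟨cs₁, hcs₁, e', he', hee'⟩ :=
        ihT c (by simp <;> omega) c' x _ _ _ hc hftake h1
      obtain ⟨cs₂, hcs₂, es', hes', hises⟩ :=
        ihL ds (by simp <;> omega) ds' x _ _ _ hm hfdrop h2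
      have hlen : cs₁.length = nx x c' := nx_rsubst he'
      refine ⟨cs₁ ++ cs₂, ?_, .app e' es', ?_, IsoT.app hee' hises⟩
      · exact ((hcs₁.append hcs₂).trans (by rw [List.take_append_drop]))
      · refine rsubst_app_some.2 ⟨e', es', ?_, ?_, rfl⟩
        · rw [List.take_left' hlen]; exact he'
        · rw [List.drop_left' hlen]; exact hes'
  · rintro l rfl ds' x bs cs vs hm hf hsub
    match l with
    | [] =>
      obtain ⟨rfl, rfl⟩ := rsubstL_nil_some.1 hsub
      obtain ⟨l₀, F, P⟩ := isoM_elim hm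
      cases F
      cases P.nil_eq
      cases hf
      exact ⟨[], Perm.refl _, [], rsubstL_nil_some.2 ⟨rfl, rfl⟩, isoM_of_perm (Perm.refl _)⟩
    | d :: ds =>
      obtain ⟨v, vs₀, h1, h2, rfl⟩ := rsubstL_cons_some.1 hsub
      obtain ⟨l₀, F, P⟩ := isoM_elim hm
      cases F with
      | @cons _ e _ l' hde F' =>
          have hftake := List.forall₂_take (nx x d) hf
          have hfdrop := List.forall₂_drop (nx x d) hf
          obtain ⟨cs₁, hcs₁, u', hu', hvu⟩ :=
            ihT d (by simp <;> omega) e x _ _ _ hde hftake h1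
          obtain ⟨cs₂, hcs₂, us', hus', hisus⟩ :=
            ihL ds (by simp <;> omega) l' x _ _ _ (isoM_intro F' (Perm.refl _)) hfdrop h2
          have hlen : cs₁.length = nx x e := nx_rsubst hu'
          have hstep : rsubstL (e :: l') x (cs₁ ++ cs₂) = some (u' :: us') := by
            refine rsubstL_cons_some.2 ⟨u', us', ?_, ?_, rfl⟩
            · rw [List.take_left' hlen]; exact hu'
            · rw [List.drop_left' hlen]; exact hus'
          obtain ⟨bs₁, hbs₁, vs₁, hsub₁, hvs₁⟩ := rsubstL_permMove P x _ _ hstep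
          refine ⟨bs₁, ?_, vs₁, hsub₁, ?_⟩
          · exact hbs₁.trans ((hcs₁.append hcs₂).trans (by rw [List.take_append_drop]))
          · exact isoM_perm_right (isoM_cons hvu hisus) hvs₁.symm

/-! #### Equation lemmas for `LsetT`/`LsetM` -/

theorem LsetT_var (n : ℕ) : LsetT (.var n) = {qVar n} := by rw [LsetT]

theorem LsetT_inl (a : Rt) : LsetT (.inl a) = qInl '' LsetT a := by rw [LsetT]

theorem LsetT_inr (a : Rt) : LsetT (.inr a) = qInr '' LsetT a := by rw [LsetT]

theorem LsetT_lam_inl (b : Rt) : LsetT (.lam (.inl b)) = {qInl (qLam (rmk b))} := by rw [LsetT]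

theorem LsetT_lam_inr (b : Rt) : LsetT (.lam (.inr b)) = {qInr (qLam (rmk b))} := by rw [LsetT]

theorem LsetT_lam_var (n : ℕ) : LsetT (.lam (.var n)) = qLam '' LsetT (.var n) := by
  conv_lhs => rw [LsetT.eq_def]

theorem LsetT_lam_lam (a : Rt) : LsetT (.lam (.lam a)) = qLam '' LsetT (.lam a) := by
  rw [LsetT] <;> simp

theorem LsetT_lam_app (c : Rt) (cs : List Rt) :
    LsetT (.lam (.app c cs)) = qLam '' LsetT (.app c cs) := by
  rw [LsetT] <;> simp

theorem LsetT_app_lam (b : Rt) (ds : List Rt) :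
    LsetT (.app (.lam b) ds) = {u | ∃ (σ : Equiv.Perm (Fin ds.length)) (v : Rt),
      rsubst b 0 (permList σ ds) = some v ∧ u = rmk v} := by
  rw [LsetT]

theorem LsetT_app_inl (b : Rt) (ds : List Rt) :
    LsetT (.app (.inl b) ds) = {qInl (qApp (rmk b) (toMul ds))} := by rw [LsetT]

theorem LsetT_app_inr (b : Rt) (ds : List Rt) :
    LsetT (.app (.inr b) ds) = {qInr (qApp (rmk b) (toMul ds))} := by rw [LsetT]

theorem LsetT_app_var (n : ℕ) (ds : List Rt) :
    LsetT (.app (.var n) ds) = {u | ∃ s ∈ LsetT (.var n), ∃ m ∈ LsetM ds, u = qApp s m} := by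
  conv_lhs => rw [LsetT.eq_def]
  simp [Rt.headVarR, LsetT_var]

theorem LsetT_app_app (c : Rt) (cs ds : List Rt) :
    LsetT (.app (.app c cs) ds) =
      if (Rt.app c cs).headVarR then
        {u | ∃ s ∈ LsetT (.app c cs), ∃ m ∈ LsetM ds, u = qApp s m}
      else (fun s => qApp s (toMul ds)) '' LsetT (.app c cs) := by
  rw [LsetT] <;> simp

theorem LsetM_nil : LsetM [] = {0} := by rw [LsetM]

theorem LsetM_cons (d : Rt) (ds : List Rt) :
    LsetM (d :: ds) = {m | ∃ u ∈ LsetT d, ∃ m' ∈ LsetM ds, m = u ::ₘ m'} := by rw [LsetM]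

theorem LsetM_char {m : Multiset ResTerm} {ds : List Rt} :
    m ∈ LsetM ds ↔ ∃ us : List ResTerm, Forall₂ (fun u d => u ∈ LsetT d) us ds ∧ m = ↑us := by
  induction ds generalizing m with
  | nil =>
    rw [LsetM_nil]
    constructor
    · rintro rfl; exact ⟨[], Forall₂.nil, rfl⟩
    · rintro ⟨us, hus, rfl⟩; cases hus; rfl
  | cons d ds ih =>
    rw [LsetM_cons]
    constructor
    · rintro ⟨u, hu, m', hm', rfl⟩
      obtain ⟨us, hus, rfl⟩ := ih.1 hm'
      exact ⟨u :: us, hus.cons hu, rfl⟩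
    · rintro ⟨us, hus, rfl⟩
      cases hus with
      | @cons u _ us _ hu hus' =>
        exact ⟨u, hu, ↑us, ih.2 ⟨us, hus', rfl⟩, rfl⟩

/-! #### `LsetT` is invariant under isomorphism -/

theorem isoM_symm {ds ds' : List Rt} (h : IsoM ds ds') : IsoM ds' ds := by
  obtain ⟨l, F, P⟩ := isoM_elim h
  have F' : Forall₂ IsoT l ds := by
    rw [List.forall₂_iff_get] at F ⊢
    exact ⟨F.1.symm, fun i h1 h2 => isoT_symm _ _ (F.2 i h2 h1)⟩
  obtain ⟨m', hm', hf'⟩ := forall₂_perm_left P F'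
  exact isoM_intro hf' hm'

theorem toMul_isoM {ds ds' : List Rt} (h : IsoM ds ds') : toMul ds = toMul ds' := by
  obtain ⟨l, F, P⟩ := isoM_elim h
  have h1 : ds.map rmk = l.map rmk := by
    apply List.ext_get (by simp [F.length_eq])
    intro i h1 h2
    simp only [List.get_eq_getElem, List.getElem_map]
    exact rmk_eq_iff.2 (F.get (by simpa using h1) (by simpa using h2))
  show (↑(ds.map rmk) : Multiset ResTerm) = ↑(ds'.map rmk)
  rw [h1, ← Multiset.coe_eq_coe.2 (P.map rmk)]

theorem forall₂_permList {R : Rt → Rt → Prop} {n : ℕ} (σ : Equiv.Perm (Fin n))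
    {ds l : List Rt} (F : Forall₂ R ds l) : Forall₂ R (permList σ ds) (permList σ l) := by
  by_cases h : ds.length = n
  · have hl : l.length = n := by rw [← F.length_eq]; exact h
    unfold permList
    rw [dif_pos h, dif_pos hl]
    rw [List.forall₂_iff_get]
    refine ⟨by simp, fun i h1 h2 => ?_⟩
    rw [List.get_ofFn, List.get_ofFn]
    exact F.get _ _
  · have hl : ¬ l.length = n := by rw [← F.length_eq]; exact h
    unfold permList
    rw [dif_neg h, dif_neg hl]
    exact F

theorem LsetT_app_lam_sub {b b' : Rt} {ds ds' : List Rt} (hb : IsoT b b') (hm : IsoM ds ds') :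
    LsetT (.app (.lam b) ds) ⊆ LsetT (.app (.lam b') ds') := by
  rw [LsetT_app_lam, LsetT_app_lam]
  rintro u ⟨σ, v, hsub, rfl⟩
  obtain ⟨l, F, P⟩ := isoM_elim hm
  obtain ⟨cs', hcs', v', hv', hvv'⟩ :=
    rsubst_isoP_both.1 b b' 0 (permList σ ds) (permList σ l) v hb (forall₂_permList σ F) hsub
  have hperm : ds' ~ cs' := ((hcs'.trans (permList_perm σ l)).trans P).symm
  obtain ⟨τ, hτ⟩ := perm_realize hperm
  exact ⟨τ, v', by rw [← hτ]; exact hv', rmk_eq_iff.2 hvv'⟩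

theorem Lset_iso_both :
    (∀ a : Rt, ∀ a', IsoT a a' → LsetT a = LsetT a') ∧
    (∀ l : List Rt, ∀ l', IsoM l l' → LsetM l = LsetM l') := by
  refine Rt.strongInd2 (fun n ihT ihL => ⟨?_, ?_⟩)
  · rintro a rfl a' hiso
    cases hiso with
    | var m => rfl
    | @lam m m' h =>
      cases h with
      | var k => rfl
      | @lam a₁ a₁' h1 =>
        rw [LsetT_lam_lam, LsetT_lam_lam, ihT (.lam a₁) (by simp <;> omega) _ (IsoT.lam h1)]
      | @inl a₁ a₁' h1 =>
        rw [LsetT_lam_inl, LsetT_lam_inl, rmk_eq_iff.2 h1]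
      | @inr a₁ a₁' h1 =>
        rw [LsetT_lam_inr, LsetT_lam_inr, rmk_eq_iff.2 h1]
      | @app c c' cs cs' hc hmm =>
        rw [LsetT_lam_app, LsetT_lam_app,
          ihT (.app c cs) (by simp <;> omega) _ (IsoT.app hc hmm)]
    | @inl a₁ a₁' h => rw [LsetT_inl, LsetT_inl, ihT a₁ (by simp <;> omega) _ h]
    | @inr a₁ a₁' h => rw [LsetT_inr, LsetT_inr, ihT a₁ (by simp <;> omega) _ h]
    | @app c c' ds ds' hc hm =>
      cases hc with
      | var k =>
        rw [LsetT_app_var, LsetT_app_var, ihL ds (by simp <;> omega) _ hm]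
      | @lam b b' hb =>
        exact Set.Subset.antisymm (LsetT_app_lam_sub hb hm)
          (LsetT_app_lam_sub (isoT_symm _ _ hb) (isoM_symm hm))
      | @inl b b' hb =>
        rw [LsetT_app_inl, LsetT_app_inl, rmk_eq_iff.2 hb, toMul_isoM hm]
      | @inr b b' hb =>
        rw [LsetT_app_inr, LsetT_app_inr, rmk_eq_iff.2 hb, toMul_isoM hm]
      | @app c₁ c₁' cs₁ cs₁' hc₁ hm₁ =>
        rw [LsetT_app_app, LsetT_app_app]
        have hhv : (Rt.app c₁ cs₁).headVarR = (Rt.app c₁' cs₁').headVarR :=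
          headVarR_isoT _ _ (IsoT.app hc₁ hm₁)
        have hLc : LsetT (.app c₁ cs₁) = LsetT (.app c₁' cs₁') :=
          ihT (.app c₁ cs₁) (by simp <;> omega) _ (IsoT.app hc₁ hm₁)
        rw [hhv, hLc, ihL ds (by simp <;> omega) _ hm, toMul_isoM hm]
  · rintro l rfl l' hm
    obtain ⟨l₀, F, P⟩ := isoM_elim hm
    have hpt : ∀ i (h1 : i < l.length) (h2 : i < l₀.length),
        LsetT (l.get ⟨i, h1⟩) = LsetT (l₀.get ⟨i, h2⟩) := by
      intro i h1 h2
      refine ihT _ ?_ _ (F.get h1 h2)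
      have := sizeOf_mem_lt (List.get_mem l ⟨i, h1⟩)
      simp at this ⊢ <;> omega
    ext m
    rw [LsetM_char, LsetM_char]
    constructor
    · rintro ⟨us, hus, rfl⟩
      have hus₀ : Forall₂ (fun u d => u ∈ LsetT d) us l₀ := by
        rw [List.forall₂_iff_get] at hus ⊢
        refine ⟨by rw [hus.1, F.length_eq], fun i h1 h2 => ?_⟩
        rw [← hpt i (by omega) h2]
        exact hus.2 i h1 (by omega)
      obtain ⟨us', hperm, hus'⟩ := forall₂_perm_right hus₀ P
      exact ⟨us', hus', Multiset.coe_eq_coe.2 hperm⟩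
    · rintro ⟨us', hus', rfl⟩
      obtain ⟨us₀, hperm, hus₀⟩ := forall₂_perm_right hus' P.symm
      have hus : Forall₂ (fun u d => u ∈ LsetT d) us₀ l := by
        rw [List.forall₂_iff_get] at hus₀ ⊢
        refine ⟨by rw [hus₀.1, ← F.length_eq], fun i h1 h2 => ?_⟩
        rw [hpt i h2 (by omega)]
        exact hus₀.2 i h1 (by omega)
      exact ⟨us₀, hus, Multiset.coe_eq_coe.2 hperm⟩

theorem LsetT_iso {a a' : Rt} (h : IsoT a a') : LsetT a = LsetT a' := Lset_iso_both.1 a a' h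

theorem Lset_rmk (a : Rt) : Lset (rmk a) = LsetT a := LsetT_iso (rout_iso a)

/-! #### Taylor support and shifting -/

theorem list_shift_choice {ds : List Rt} {c : ℕ} {Q : Lam}
    (h : ∀ d ∈ ds, ∃ e, d = e.shiftR c ∧ rmk e ∈ Tsup Q) :
    ∃ es : List Rt, ds = es.map (·.shiftR c) ∧ ∀ e ∈ es, rmk e ∈ Tsup Q := by
  induction ds with
  | nil => exact ⟨[], rfl, by simp⟩
  | cons d ds ih =>
    obtain ⟨e, rfl, he⟩ := h d (mem_cons_self ..)
    obtain ⟨es, rfl, hes⟩ := ih (fun d hd => h d (mem_cons_of_mem _ hd))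
    refine ⟨e :: es, by simp, fun e' he' => ?_⟩
    rcases mem_cons.1 he' with rfl | h'
    · exact he
    · exact hes _ h'

theorem shift_mem {M : Lam} : ∀ {b : Rt} {c : ℕ},
    (rmk b ∈ Tsup (M.shift c) ↔ ∃ a, b = a.shiftR c ∧ rmk a ∈ Tsup M) := by
  induction M with
  | var n =>
    intro b c
    show rmk b ∈ Tsup (.var _) ↔ _
    rw [mem_Tsup_var]
    constructor
    · rintro rfl
      exact ⟨.var n, by rw [Rt.shiftR_var], mem_Tsup_var.2 rfl⟩
    · rintro ⟨a, rfl, ha⟩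
      rw [mem_Tsup_var.1 ha, Rt.shiftR_var]
  | lam M ih =>
    intro b c
    show rmk b ∈ Tsup (.lam _) ↔ _
    rw [mem_Tsup_lam]
    constructor
    · rintro ⟨a₁, rfl, ha₁⟩
      obtain ⟨a₂, rfl, ha₂⟩ := ih.1 ha₁
      exact ⟨.lam a₂, by rw [Rt.shiftR_lam], mem_Tsup_lam.2 ⟨a₂, rfl, ha₂⟩⟩
    · rintro ⟨a, rfl, ha⟩
      obtain ⟨a₂, rfl, ha₂⟩ := mem_Tsup_lam.1 ha
      exact ⟨a₂.shiftR (c + 1), by rw [Rt.shiftR_lam], ih.2 ⟨a₂, rfl, ha₂⟩⟩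
  | app P Q ihP ihQ =>
    intro b c
    show rmk b ∈ Tsup (.app _ _) ↔ _
    rw [mem_Tsup_app]
    constructor
    · rintro ⟨c₁, ds, rfl, hc₁, hds⟩
      obtain ⟨e, rfl, he⟩ := ihP.1 hc₁
      obtain ⟨es, rfl, hes⟩ := list_shift_choice (fun d hd => ihQ.1 (hds d hd))
      exact ⟨.app e es, by rw [Rt.shiftR_app], mem_Tsup_app.2 ⟨e, es, rfl, he, hes⟩⟩
    · rintro ⟨a, rfl, ha⟩
      obtain ⟨e, es, rfl, he, hes⟩ := mem_Tsup_app.1 ha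
      refine ⟨e.shiftR c, es.map (·.shiftR c), by rw [Rt.shiftR_app], ihP.2 ⟨e, rfl, he⟩,
        fun d hd => ?_⟩
      obtain ⟨e', he', rfl⟩ := List.mem_map.1 hd
      exact ihQ.2 ⟨e', rfl, hes e' he'⟩
  | oplus P Q ihP ihQ =>
    intro b c
    show rmk b ∈ Tsup (.oplus _ _) ↔ _
    rw [mem_Tsup_oplus]
    constructor
    · rintro (⟨a₁, rfl, ha₁⟩ | ⟨a₁, rfl, ha₁⟩)
      · obtain ⟨a₂, rfl, ha₂⟩ := ihP.1 ha₁
        exact ⟨.inl a₂, by rw [Rt.shiftR_inl], mem_Tsup_oplus.2 (Or.inl ⟨a₂, rfl, ha₂⟩)⟩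
      · obtain ⟨a₂, rfl, ha₂⟩ := ihQ.1 ha₁
        exact ⟨.inr a₂, by rw [Rt.shiftR_inr], mem_Tsup_oplus.2 (Or.inr ⟨a₂, rfl, ha₂⟩)⟩
    · rintro ⟨a, rfl, ha⟩
      rcases mem_Tsup_oplus.1 ha with ⟨a₂, rfl, ha₂⟩ | ⟨a₂, rfl, ha₂⟩
      · exact Or.inl ⟨a₂.shiftR c, by rw [Rt.shiftR_inl], ihP.2 ⟨a₂, rfl, ha₂⟩⟩
      · exact Or.inr ⟨a₂.shiftR c, by rw [Rt.shiftR_inr], ihQ.2 ⟨a₂, rfl, ha₂⟩⟩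

/-! #### Substitution commutes with the Taylor support -/

theorem subst_Tsup (P : Lam) : ∀ (x : ℕ) (N : Lam) (t : ResTerm),
    (∃ b bs v, rmk b ∈ Tsup P ∧ (∀ d ∈ bs, rmk d ∈ Tsup N) ∧ rsubst b x bs = some v ∧
      t = rmk v) ↔ t ∈ Tsup (P.subst x N) := by
  induction P with
  | var n =>
    intro x N t
    simp only [Lam.subst]
    constructor
    · rintro ⟨b, bs, v, hb, hbs, hsub, rfl⟩
      rw [mem_Tsup_var] at hb
      subst hb
      rcases rsubst_var_some.1 hsub with ⟨rfl, rfl⟩ | ⟨hne, rfl, rfl⟩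
      · rw [if_pos rfl]
        exact hbs v (mem_cons_self ..)
      · rw [if_neg hne]
        split_ifs with h <;> exact mem_Tsup_var.2 rfl
    · intro ht
      rcases eq_or_ne n x with rfl | hne
      · rw [if_pos rfl] at ht
        exact ⟨.var n, [rout t], rout t, mem_Tsup_var.2 rfl,
          by simpa [rmk_rout] using ht, rsubst_var_self _ _, (rmk_rout t).symm⟩
      · rw [if_neg hne] at ht
        refine ⟨.var n, [], .var (if x < n then n - 1 else n), mem_Tsup_var.2 rfl,
          by simp, rsubst_var_ne hne, ?_⟩
        split_ifs at ht ⊢ with h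
        · have h2 : rmk (rout t) ∈ Tsup (.var (n - 1)) := by rw [rmk_rout]; exact ht
          rw [← rmk_rout t, mem_Tsup_var.1 h2]
        · have h2 : rmk (rout t) ∈ Tsup (.var n) := by rw [rmk_rout]; exact ht
          rw [← rmk_rout t, mem_Tsup_var.1 h2]
  | lam M ih =>
    intro x N t
    simp only [Lam.subst]
    constructor
    · rintro ⟨b, bs, v, hb, hbs, hsub, rfl⟩
      obtain ⟨a, rfl, ha⟩ := mem_Tsup_lam.1 hb
      rw [rsubst_lam, Option.map_eq_some_iff] at hsub
      obtain ⟨w, hw, rfl⟩ := hsub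
      have hbs' : ∀ d ∈ bs.map (Rt.shiftR 0), rmk d ∈ Tsup (N.shift 0) := by
        intro d hd
        obtain ⟨e, he, rfl⟩ := List.mem_map.1 hd
        exact shift_mem.2 ⟨e, rfl, hbs e he⟩
      have hmem := (ih (x + 1) (N.shift 0) (rmk w)).1 ⟨a, _, w, ha, hbs', hw, rfl⟩
      exact mem_Tsup_lam.2 ⟨w, rfl, hmem⟩
    · intro ht
      rw [← rmk_rout t] at ht ⊢
      obtain ⟨w, hbe, hw⟩ := mem_Tsup_lam.1 ht
      obtain ⟨a, bs', v, ha, hbs', hsub, hveq⟩ := (ih (x + 1) (N.shift 0) (rmk w)).2 hw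
      obtain ⟨bs, rfl, hbs⟩ := list_shift_choice (fun d hd => shift_mem.1 (hbs' d hd))
      refine ⟨.lam a, bs, .lam v, mem_Tsup_lam.2 ⟨a, rfl, ha⟩, hbs, ?_, ?_⟩
      · rw [rsubst_lam, hsub]; rfl
      · rw [hbe, ← qLam_rmk, ← qLam_rmk, hveq]
  | app P Q ihP ihQ =>
    intro x N t
    simp only [Lam.subst]
    constructor
    · rintro ⟨b, bs, v, hb, hbs, hsub, rfl⟩
      obtain ⟨c, ds, rfl, hc, hds⟩ := mem_Tsup_app.1 hb
      obtain ⟨e, es, h1, h2, rfl⟩ := rsubst_app_some.1 hsub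
      have hLfwd : ∀ (ds : List Rt), (∀ d ∈ ds, rmk d ∈ Tsup Q) →
          ∀ (bs es : List Rt), (∀ d ∈ bs, rmk d ∈ Tsup N) →
          rsubstL ds x bs = some es → ∀ e' ∈ es, rmk e' ∈ Tsup (Q.subst x N) := by
        intro ds
        induction ds with
        | nil =>
          intro _ bs es _ hsub e' he'
          obtain ⟨rfl, rfl⟩ := rsubstL_nil_some.1 hsub
          cases he'
        | cons d ds ihds =>
          intro hmem bs es hbsN hsub e' he'
          obtain ⟨v', vs', hh1, hh2, rfl⟩ := rsubstL_cons_some.1 hsub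
          rcases mem_cons.1 he' with rfl | h'
          · exact (ihQ x N (rmk e')).1 ⟨d, _, e', hmem d (mem_cons_self ..),
              fun d' hd' => hbsN d' (List.mem_of_mem_take hd'), hh1, rfl⟩
          · exact ihds (fun d' hd' => hmem d' (mem_cons_of_mem _ hd')) _ _
              (fun d' hd' => hbsN d' (List.mem_of_mem_drop hd')) hh2 e' h'
      have hmemP := (ihP x N (rmk e)).1 ⟨c, _, e, hc,
        fun d' hd' => hbs d' (List.mem_of_mem_take hd'), h1, rfl⟩
      exact mem_Tsup_app.2 ⟨e, es, rfl, hmemP,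
        hLfwd ds hds _ _ (fun d' hd' => hbs d' (List.mem_of_mem_drop hd')) h2⟩
    · intro ht
      rw [← rmk_rout t] at ht ⊢
      obtain ⟨c, ds, heq, hc, hds⟩ := mem_Tsup_app.1 ht
      have hLbwd : ∀ ds : List Rt, (∀ d ∈ ds, rmk d ∈ Tsup (Q.subst x N)) →
          ∃ ds₀ bs₂ vs, (∀ d ∈ ds₀, rmk d ∈ Tsup Q) ∧ (∀ d ∈ bs₂, rmk d ∈ Tsup N) ∧
            rsubstL ds₀ x bs₂ = some vs ∧ Forall₂ (fun v d => rmk v = rmk d) vs ds := by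
        intro ds
        induction ds with
        | nil => exact fun _ => ⟨[], [], [], by simp, by simp,
            rsubstL_nil_some.2 ⟨rfl, rfl⟩, Forall₂.nil⟩
        | cons d ds ihds =>
          intro hmem
          obtain ⟨b₂, bs₂', v₂, hb₂, hbs₂', hs₂, hveq⟩ :=
            (ihQ x N (rmk d)).2 (hmem d (mem_cons_self ..))
          obtain ⟨ds₀, bs₃, vs₀, hds₀, hbs₃, hsub₃, hfa⟩ :=
            ihds (fun d' hd' => hmem d' (mem_cons_of_mem _ hd'))
          have hlen : bs₂'.length = nx x b₂ := nx_rsubst hs₂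
          refine ⟨b₂ :: ds₀, bs₂' ++ bs₃, v₂ :: vs₀, ?_, ?_, ?_, hfa.cons hveq.symm⟩
          · intro d' hd'
            rcases mem_cons.1 hd' with rfl | h'
            · exact hb₂
            · exact hds₀ d' h'
          · intro d' hd'
            rcases List.mem_append.1 hd' with h' | h'
            · exact hbs₂' d' h'
            · exact hbs₃ d' h'
          · refine rsubstL_cons_some.2 ⟨v₂, vs₀, ?_, ?_, rfl⟩
            · rw [List.take_left' hlen]; exact hs₂
            · rw [List.drop_left' hlen]; exact hsub₃
      obtain ⟨b₁, bs₁, v₁, hb₁, hbs₁, hs₁, hveq₁⟩ := (ihP x N (rmk c)).2 hc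
      obtain ⟨ds₀, bs₂, vs, hds₀, hbs₂, hsub₂, hfa⟩ := hLbwd ds hds
      have hlen₁ : bs₁.length = nx x b₁ := nx_rsubst hs₁
      refine ⟨.app b₁ ds₀, bs₁ ++ bs₂, .app v₁ vs,
        mem_Tsup_app.2 ⟨b₁, ds₀, rfl, hb₁, hds₀⟩, ?_, ?_, ?_⟩
      · intro d' hd'
        rcases List.mem_append.1 hd' with h' | h'
        · exact hbs₁ d' h'
        · exact hbs₂ d' h'
      · refine rsubst_app_some.2 ⟨v₁, vs, ?_, ?_, rfl⟩
        · rw [List.take_left' hlen₁]; exact hs₁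
        · rw [List.drop_left' hlen₁]; exact hsub₂
      · rw [heq]
        refine (rmk_eq_iff.2 (IsoT.app (rmk_eq_iff.1 hveq₁.symm) ?_)).symm
        refine isoM_intro ?_ (Perm.refl ds)
        rw [List.forall₂_iff_get] at hfa ⊢
        exact ⟨hfa.1, fun i h1 h2 => rmk_eq_iff.1 (hfa.2 i h1 h2)⟩
  | oplus P Q ihP ihQ =>
    intro x N t
    simp only [Lam.subst]
    constructor
    · rintro ⟨b, bs, v, hb, hbs, hsub, rfl⟩
      rcases mem_Tsup_oplus.1 hb with ⟨a, rfl, ha⟩ | ⟨a, rfl, ha⟩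
      · rw [rsubst_inl, Option.map_eq_some_iff] at hsub
        obtain ⟨w, hw, rfl⟩ := hsub
        exact mem_Tsup_oplus.2 (Or.inl ⟨w, rfl, (ihP x N (rmk w)).1 ⟨a, bs, w, ha, hbs, hw, rfl⟩⟩)
      · rw [rsubst_inr, Option.map_eq_some_iff] at hsub
        obtain ⟨w, hw, rfl⟩ := hsub
        exact mem_Tsup_oplus.2 (Or.inr ⟨w, rfl, (ihQ x N (rmk w)).1 ⟨a, bs, w, ha, hbs, hw, rfl⟩⟩)
    · intro ht
      rw [← rmk_rout t] at ht ⊢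
      rcases mem_Tsup_oplus.1 ht with ⟨a, ha, hmem⟩ | ⟨a, ha, hmem⟩
      · obtain ⟨b, bs, v, hb, hbs, hsub, hveq⟩ := (ihP x N (rmk a)).2 hmem
        refine ⟨.inl b, bs, .inl v, mem_Tsup_oplus.2 (Or.inl ⟨b, rfl, hb⟩), hbs, ?_, ?_⟩
        · rw [rsubst_inl, hsub]; rfl
        · rw [ha, ← qInl_rmk, ← qInl_rmk, hveq]
      · obtain ⟨b, bs, v, hb, hbs, hsub, hveq⟩ := (ihQ x N (rmk a)).2 hmem
        refine ⟨.inr b, bs, .inr v, mem_Tsup_oplus.2 (Or.inr ⟨b, rfl, hb⟩), hbs, ?_, ?_⟩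
        · rw [rsubst_inr, hsub]; rfl
        · rw [ha, ← qInr_rmk, ← qInr_rmk, hveq]

/-! #### Head-variable and `LsetT` vs `Tsup` helpers -/

theorem headVar_mem : ∀ (M : Lam) {c : Rt}, rmk c ∈ Tsup M → c.headVarR = M.headVar := by
  intro M
  induction M with
  | var n => intro c hc; rw [mem_Tsup_var.1 hc]; rfl
  | lam M _ =>
    intro c hc
    obtain ⟨a, rfl, _⟩ := mem_Tsup_lam.1 hc
    rfl
  | app P Q ihP _ =>
    intro c hc
    obtain ⟨c₁, ds, rfl, hc₁, _⟩ := mem_Tsup_app.1 hc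
    show c₁.headVarR = P.headVar
    exact ihP hc₁
  | oplus P Q _ _ =>
    intro c hc
    rcases mem_Tsup_oplus.1 hc with ⟨a, rfl, _⟩ | ⟨a, rfl, _⟩ <;> rfl

theorem LsetT_lam_of_mem {m : Rt} {M : Lam} (hm : rmk m ∈ Tsup M)
    (hno : ∀ P Q, M ≠ .oplus P Q) : LsetT (.lam m) = qLam '' LsetT m := by
  cases M with
  | var n => rw [mem_Tsup_var.1 hm]; exact LsetT_lam_var n
  | lam M =>
    obtain ⟨a, rfl, _⟩ := mem_Tsup_lam.1 hm
    exact LsetT_lam_lam a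
  | app P Q =>
    obtain ⟨c, ds, rfl, _, _⟩ := mem_Tsup_app.1 hm
    exact LsetT_lam_app c ds
  | oplus P Q => exact absurd rfl (hno P Q)

theorem LsetT_app_of_mem {c : Rt} {ds : List Rt} {M : Lam} (hc : rmk c ∈ Tsup M)
    (hM : (∃ n, M = .var n) ∨ ∃ P Q, M = .app P Q) :
    LsetT (.app c ds) =
      if M.headVar then {u | ∃ s ∈ LsetT c, ∃ m ∈ LsetM ds, u = qApp s m}
      else (fun s => qApp s (toMul ds)) '' LsetT c := by
  rcases hM with ⟨n, rfl⟩ | ⟨P, Q, rfl⟩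
  · rw [mem_Tsup_var.1 hc]
    rw [LsetT_app_var, if_pos (show (Lam.var n).headVar = true from rfl)]
  · obtain ⟨c₁, cs₁, rfl, hc₁, _⟩ := mem_Tsup_app.1 hc
    rw [LsetT_app_app]
    have : (Rt.app c₁ cs₁).headVarR = (Lam.app P Q).headVar := headVar_mem _ hc
    rw [this]

theorem list_LsetT_choice {N : Lam} : ∀ us : List ResTerm,
    (∀ u ∈ us, ∃ d, rmk d ∈ Tsup N ∧ u ∈ LsetT d) →
    ∃ ds : List Rt, Forall₂ (fun u d => u ∈ LsetT d) us ds ∧ ∀ d ∈ ds, rmk d ∈ Tsup N := by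
  intro us
  induction us with
  | nil => exact fun _ => ⟨[], Forall₂.nil, by simp⟩
  | cons u us ih =>
    intro h
    obtain ⟨d, hd, hu⟩ := h u (mem_cons_self ..)
    obtain ⟨ds, hfa, hds⟩ := ih (fun u' hu' => h u' (mem_cons_of_mem _ hu'))
    refine ⟨d :: ds, hfa.cons hu, fun d' hd' => ?_⟩
    rcases mem_cons.1 hd' with rfl | h'
    · exact hd
    · exact hds d' h'

theorem lam_step {M : Lam} (ihM : {t : ResTerm | ∃ a, rmk a ∈ Tsup M ∧ t ∈ LsetT a} = Tsup M.headL)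
    (hno : ∀ P Q, M ≠ .oplus P Q) :
    {t : ResTerm | ∃ a, rmk a ∈ Tsup (.lam M) ∧ t ∈ LsetT a} = Tsup (.lam M.headL) := by
  ext t
  simp only [Set.mem_setOf_eq]
  constructor
  · rintro ⟨a, ha, ht⟩
    obtain ⟨m, rfl, hm⟩ := mem_Tsup_lam.1 ha
    rw [LsetT_lam_of_mem hm hno] at ht
    obtain ⟨u, hu, rfl⟩ := ht
    have : u ∈ Tsup M.headL := by rw [← ihM]; exact ⟨m, hm, hu⟩
    exact ⟨u, this, rfl⟩
  · rintro ⟨u, hu, rfl⟩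
    rw [← ihM] at hu
    obtain ⟨m, hm, hum⟩ := hu
    exact ⟨.lam m, mem_Tsup_lam.2 ⟨m, rfl, hm⟩,
      by rw [LsetT_lam_of_mem hm hno]; exact ⟨u, hum, rfl⟩⟩

theorem app_step {M N : Lam}
    (ihM : {t : ResTerm | ∃ a, rmk a ∈ Tsup M ∧ t ∈ LsetT a} = Tsup M.headL)
    (ihN : {t : ResTerm | ∃ a, rmk a ∈ Tsup N ∧ t ∈ LsetT a} = Tsup N.headL)
    (hM : (∃ n, M = .var n) ∨ ∃ P Q, M = .app P Q) :
    {t : ResTerm | ∃ a, rmk a ∈ Tsup (.app M N) ∧ t ∈ LsetT a} =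
      Tsup (if M.headVar then Lam.app M.headL N.headL else .app M.headL N) := by
  ext t
  simp only [Set.mem_setOf_eq]
  by_cases hv : M.headVar
  · rw [if_pos hv]
    constructor
    · rintro ⟨a, ha, ht⟩
      obtain ⟨c, ds, rfl, hc, hds⟩ := mem_Tsup_app.1 ha
      rw [LsetT_app_of_mem hc hM, if_pos hv] at ht
      obtain ⟨s, hsL, m, hmL, rfl⟩ := ht
      refine ⟨s, by rw [← ihM]; exact ⟨c, hc, hsL⟩, m, ?_, rfl⟩
      intro v hvm
      obtain ⟨us, hfa, rfl⟩ := LsetM_char.1 hmL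
      obtain ⟨d, hd, hvd⟩ := forall₂_mem_left hfa (Multiset.mem_coe.1 hvm)
      rw [← ihN]
      exact ⟨d, hds d hd, hvd⟩
    · rintro ⟨s, hs, tb, htb, rfl⟩
      rw [← ihM] at hs
      obtain ⟨c, hc, hsc⟩ := hs
      have hch : ∀ u ∈ tb.toList, ∃ d, rmk d ∈ Tsup N ∧ u ∈ LsetT d := by
        intro u hu
        have h2 := htb u (Multiset.mem_toList.1 hu)
        rw [← ihN] at h2
        exact h2
      obtain ⟨ds, hfa, hds⟩ := list_LsetT_choice tb.toList hch
      refine ⟨.app c ds, mem_Tsup_app.2 ⟨c, ds, rfl, hc, hds⟩, ?_⟩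
      rw [LsetT_app_of_mem hc hM, if_pos hv]
      refine ⟨s, hsc, ↑tb.toList, LsetM_char.2 ⟨tb.toList, hfa, rfl⟩, ?_⟩
      rw [Multiset.coe_toList]
  · rw [if_neg hv]
    constructor
    · rintro ⟨a, ha, ht⟩
      obtain ⟨c, ds, rfl, hc, hds⟩ := mem_Tsup_app.1 ha
      rw [LsetT_app_of_mem hc hM, if_neg hv] at ht
      obtain ⟨s, hsL, rfl⟩ := ht
      exact ⟨s, by rw [← ihM]; exact ⟨c, hc, hsL⟩, toMul ds,
        fun v hv2 => by obtain ⟨d, hd, rfl⟩ := mem_toMul.1 hv2; exact hds d hd, rfl⟩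
    · rintro ⟨s, hs, tb, htb, rfl⟩
      rw [← ihM] at hs
      obtain ⟨c, hc, hsc⟩ := hs
      refine ⟨.app c (tb.toList.map rout), mem_Tsup_app.2 ⟨c, _, rfl, hc, ?_⟩, ?_⟩
      · intro d hd
        obtain ⟨v, hv2, rfl⟩ := List.mem_map.1 hd
        rw [rmk_rout]
        exact htb v (Multiset.mem_toList.1 hv2)
      · rw [LsetT_app_of_mem hc hM, if_neg hv, toMul_routs]
        exact ⟨s, hsc, rfl⟩

/-! #### The main rigid-level theorem -/

theorem main_rigid : ∀ M : Lam,
    {t : ResTerm | ∃ a, rmk a ∈ Tsup M ∧ t ∈ LsetT a} = Tsup M.headL := by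
  intro M
  induction M with
  | var n =>
    have hL : Lam.headL (.var n) = .var n := rfl
    rw [hL]
    ext t
    simp only [Set.mem_setOf_eq]
    constructor
    · rintro ⟨a, ha, ht⟩
      rw [mem_Tsup_var.1 ha, LsetT_var] at ht
      rw [ht]
      exact mem_Tsup_var.2 rfl
    · intro ht
      exact ⟨.var n, mem_Tsup_var.2 rfl, by rw [LsetT_var]; exact ht⟩
  | oplus M N ihM ihN =>
    have hL : Lam.headL (.oplus M N) = .oplus M.headL N.headL := rfl
    rw [hL]
    ext t
    simp only [Set.mem_setOf_eq]
    constructor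
    · rintro ⟨a, ha, ht⟩
      rcases mem_Tsup_oplus.1 ha with ⟨b, rfl, hb⟩ | ⟨b, rfl, hb⟩
      · rw [LsetT_inl] at ht
        obtain ⟨u, hu, rfl⟩ := ht
        have : u ∈ Tsup M.headL := by rw [← ihM]; exact ⟨b, hb, hu⟩
        exact Or.inl ⟨u, this, rfl⟩
      · rw [LsetT_inr] at ht
        obtain ⟨u, hu, rfl⟩ := ht
        have : u ∈ Tsup N.headL := by rw [← ihN]; exact ⟨b, hb, hu⟩
        exact Or.inr ⟨u, this, rfl⟩
    · rintro (⟨u, hu, rfl⟩ | ⟨u, hu, rfl⟩)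
      · rw [← ihM] at hu
        obtain ⟨b, hb, hub⟩ := hu
        exact ⟨.inl b, mem_Tsup_oplus.2 (Or.inl ⟨b, rfl, hb⟩),
          by rw [LsetT_inl]; exact ⟨u, hub, rfl⟩⟩
      · rw [← ihN] at hu
        obtain ⟨b, hb, hub⟩ := hu
        exact ⟨.inr b, mem_Tsup_oplus.2 (Or.inr ⟨b, rfl, hb⟩),
          by rw [LsetT_inr]; exact ⟨u, hub, rfl⟩⟩
  | lam M ihM =>
    cases M with
    | oplus P Q =>
      have hL : Lam.headL (.lam (.oplus P Q)) = .oplus (.lam P) (.lam Q) := rfl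
      rw [hL]
      ext t
      simp only [Set.mem_setOf_eq]
      constructor
      · rintro ⟨a, ha, ht⟩
        obtain ⟨m, rfl, hm⟩ := mem_Tsup_lam.1 ha
        rcases mem_Tsup_oplus.1 hm with ⟨b, rfl, hb⟩ | ⟨b, rfl, hb⟩
        · rw [LsetT_lam_inl] at ht
          rw [ht]
          exact Or.inl ⟨qLam (rmk b), ⟨rmk b, hb, rfl⟩, rfl⟩
        · rw [LsetT_lam_inr] at ht
          rw [ht]
          exact Or.inr ⟨qLam (rmk b), ⟨rmk b, hb, rfl⟩, rfl⟩
      · rintro (⟨u, ⟨s, hs, rfl⟩, rfl⟩ | ⟨u, ⟨s, hs, rfl⟩, rfl⟩)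
        · refine ⟨.lam (.inl (rout s)), mem_Tsup_lam.2 ⟨.inl (rout s), rfl,
            mem_Tsup_oplus.2 (Or.inl ⟨rout s, rfl, by rw [rmk_rout]; exact hs⟩)⟩, ?_⟩
          rw [LsetT_lam_inl, rmk_rout]
          rfl
        · refine ⟨.lam (.inr (rout s)), mem_Tsup_lam.2 ⟨.inr (rout s), rfl,
            mem_Tsup_oplus.2 (Or.inr ⟨rout s, rfl, by rw [rmk_rout]; exact hs⟩)⟩, ?_⟩
          rw [LsetT_lam_inr, rmk_rout]
          rfl
    | var k =>
      have hL : Lam.headL (.lam (.var k)) = .lam (Lam.headL (.var k)) := rfl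
      rw [hL]
      apply lam_step ihM
      intro P Q h
      cases h
    | lam M' =>
      have hL : Lam.headL (.lam (.lam M')) = .lam (Lam.headL (.lam M')) := rfl
      rw [hL]
      apply lam_step ihM
      intro P Q h
      cases h
    | app P' Q' =>
      have hL : Lam.headL (.lam (.app P' Q')) = .lam (Lam.headL (.app P' Q')) := rfl
      rw [hL]
      apply lam_step ihM
      intro P Q h
      cases h
  | app M N ihM ihN =>
    cases M with
    | lam P =>
      have hL : Lam.headL (.app (.lam P) N) = P.subst 0 N := rfl
      rw [hL]
      ext t
      simp only [Set.mem_setOf_eq]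
      constructor
      · rintro ⟨a, ha, ht⟩
        obtain ⟨c, ds, rfl, hc, hds⟩ := mem_Tsup_app.1 ha
        obtain ⟨b, rfl, hb⟩ := mem_Tsup_lam.1 hc
        rw [LsetT_app_lam] at ht
        obtain ⟨σ, v, hsub, rfl⟩ := ht
        refine (subst_Tsup P 0 N _).1 ⟨b, permList σ ds, v, hb, ?_, hsub, rfl⟩
        intro d hd
        exact hds d ((permList_perm σ ds).mem_iff.1 hd)
      · intro ht
        obtain ⟨b, bs, v, hb, hbs, hsub, rfl⟩ := (subst_Tsup P 0 N t).2 ht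
        refine ⟨.app (.lam b) bs,
          mem_Tsup_app.2 ⟨.lam b, bs, rfl, mem_Tsup_lam.2 ⟨b, rfl, hb⟩, hbs⟩, ?_⟩
        rw [LsetT_app_lam]
        exact ⟨1, v, by rw [permList_one]; exact hsub, rfl⟩
    | oplus P Q =>
      have hL : Lam.headL (.app (.oplus P Q) N) = .oplus (.app P N) (.app Q N) := rfl
      rw [hL]
      ext t
      simp only [Set.mem_setOf_eq]
      constructor
      · rintro ⟨a, ha, ht⟩
        obtain ⟨c, ds, rfl, hc, hds⟩ := mem_Tsup_app.1 ha
        rcases mem_Tsup_oplus.1 hc with ⟨b, rfl, hb⟩ | ⟨b, rfl, hb⟩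
        · rw [LsetT_app_inl] at ht
          rw [Set.mem_singleton_iff.1 ht]
          refine Or.inl ⟨qApp (rmk b) (toMul ds), ⟨rmk b, hb, toMul ds, fun v hv => ?_, rfl⟩, rfl⟩
          obtain ⟨d, hd, rfl⟩ := mem_toMul.1 hv
          exact hds d hd
        · rw [LsetT_app_inr] at ht
          rw [Set.mem_singleton_iff.1 ht]
          refine Or.inr ⟨qApp (rmk b) (toMul ds), ⟨rmk b, hb, toMul ds, fun v hv => ?_, rfl⟩, rfl⟩
          obtain ⟨d, hd, rfl⟩ := mem_toMul.1 hv
          exact hds d hd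
      · rintro (⟨u, ⟨s, hs, tb, htb, rfl⟩, rfl⟩ | ⟨u, ⟨s, hs, tb, htb, rfl⟩, rfl⟩)
        · refine ⟨.app (.inl (rout s)) (tb.toList.map rout),
            mem_Tsup_app.2 ⟨.inl (rout s), _, rfl,
              mem_Tsup_oplus.2 (Or.inl ⟨rout s, rfl, by rw [rmk_rout]; exact hs⟩), ?_⟩, ?_⟩
          · intro d hd
            obtain ⟨v, hv, rfl⟩ := List.mem_map.1 hd
            rw [rmk_rout]
            exact htb v (Multiset.mem_toList.1 hv)
          · rw [LsetT_app_inl, rmk_rout, toMul_routs]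
            rfl
        · refine ⟨.app (.inr (rout s)) (tb.toList.map rout),
            mem_Tsup_app.2 ⟨.inr (rout s), _, rfl,
              mem_Tsup_oplus.2 (Or.inr ⟨rout s, rfl, by rw [rmk_rout]; exact hs⟩), ?_⟩, ?_⟩
          · intro d hd
            obtain ⟨v, hv, rfl⟩ := List.mem_map.1 hd
            rw [rmk_rout]
            exact htb v (Multiset.mem_toList.1 hv)
          · rw [LsetT_app_inr, rmk_rout, toMul_routs]
            rfl
    | var n =>
      have hL : Lam.headL (.app (.var n) N) =
          if (Lam.var n).headVar then Lam.app (Lam.var n).headL N.headL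
          else .app (Lam.var n).headL N := rfl
      rw [hL]
      exact app_step ihM ihN (Or.inl ⟨n, rfl⟩)
    | app P' Q' =>
      have hL : Lam.headL (.app (.app P' Q') N) =
          if (Lam.app P' Q').headVar then Lam.app (Lam.app P' Q').headL N.headL
          else .app (Lam.app P' Q').headL N := rfl
      rw [hL]
      exact app_step ihM ihN (Or.inr ⟨P', Q', rfl⟩)

/-! ### STATEMENT 4:
For every λ⊕-term `M`, `L(𝒯(M)) = 𝒯(L(M))`: the set of resource terms
occurring in the hereditary head reduct of some element of the Taylor support
of `M` equals the Taylor support of the hereditary head reduct of `M`. -/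
theorem L_commutes_with_taylor_support (M : Lam) :
    {t : ResTerm | ∃ s ∈ Tsup M, t ∈ Lset s} = Tsup M.headL := by
  rw [← main_rigid M]
  ext t
  simp only [Set.mem_setOf_eq]
  constructor
  · rintro ⟨s, hs, ht⟩
    exact ⟨rout s, by rw [rmk_rout]; exact hs, ht⟩
  · rintro ⟨a, ha, ht⟩
    exact ⟨rmk a, ha, by rw [Lset_rmk]; exact ht⟩
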